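/- arXiv:1505.07956 — 8 statements merged into one kernel-verified Lean document; each statement's English description precedes it below -/
import Mathlib

section
/- Let φ : ℕ → ℝ≥0 be non-increasing, let G_n = ∑_{i=0}^n φ(i), and for v ≥ 2 define Δ_{n,v} = ∑_{0 ≤ j_1 ≤ ⋯ ≤ j_v ≤ n} ∏_{t=2}^v φ(j_t ∨ j_1). Then for all v ≥ 3, Δ_{n,v} ≤ G_n · Δ_{n,v-1}, and hence Δ_{n,v} ≤ G_n^{v-3} Δ_{n,3}. -/
open Finset

/-- `Delta φ n v` is `Δ_{n,v} = ∑_{0 ≤ j_1 ≤ ⋯ ≤ j_v ≤ n} ∏_{t=2}^v φ(j_t ∨ j_1)`,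
encoded with `j_1 = p.1` and `(j_2,…,j_v) = p.2`. -/
def Delta (φ : ℕ → ℝ) (n v : ℕ) : ℝ :=
  ∑ p ∈ (Finset.univ : Finset (Fin (n + 1) × (Fin (v - 1) → Fin (n + 1)))).filter
      (fun p => Monotone (fun t => (p.2 t : ℕ)) ∧ ∀ t, (p.1 : ℕ) ≤ (p.2 t : ℕ)),
    ∏ t : Fin (v - 1), φ (max (p.2 t : ℕ) (p.1 : ℕ))

lemma Delta_step (φ : ℕ → ℝ) (hφ0 : ∀ m, 0 ≤ φ m) (n k : ℕ) :
    Delta φ n (k + 3) ≤ (∑ i ∈ Finset.range (n + 1), φ i) * Delta φ n (k + 2) := by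
  classical
  set S3 : Finset (Fin (n + 1) × (Fin (k + 2) → Fin (n + 1))) :=
    Finset.univ.filter
      (fun p => Monotone (fun t => (p.2 t : ℕ)) ∧ ∀ t, (p.1 : ℕ) ≤ (p.2 t : ℕ)) with hS3
  set S2 : Finset (Fin (n + 1) × (Fin (k + 1) → Fin (n + 1))) :=
    Finset.univ.filter
      (fun p => Monotone (fun t => (p.2 t : ℕ)) ∧ ∀ t, (p.1 : ℕ) ≤ (p.2 t : ℕ)) with hS2
  have h3 : Delta φ n (k + 3)
      = ∑ p ∈ S3, ∏ t : Fin (k + 2), φ (max (p.2 t : ℕ) (p.1 : ℕ)) := rfl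
  have h2 : Delta φ n (k + 2)
      = ∑ p ∈ S2, ∏ t : Fin (k + 1), φ (max (p.2 t : ℕ) (p.1 : ℕ)) := rfl
  set e : (Fin (n + 1) × (Fin (k + 2) → Fin (n + 1))) →
      ((Fin (n + 1) × (Fin (k + 1) → Fin (n + 1))) × Fin (n + 1)) :=
    fun p => ((p.1, fun t => p.2 t.castSucc), p.2 (Fin.last (k + 1))) with he
  set g : ((Fin (n + 1) × (Fin (k + 1) → Fin (n + 1))) × Fin (n + 1)) → ℝ :=
    fun q => (∏ t : Fin (k + 1), φ (max (q.1.2 t : ℕ) (q.1.1 : ℕ))) * φ (q.2 : ℕ) with hg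
  have hinj : Function.Injective e := by
    intro p q h
    have ha : p.1 = q.1 := congrArg (fun x => x.1.1) h
    have hb : ∀ t : Fin (k + 1), p.2 t.castSucc = q.2 t.castSucc :=
      fun t => congrFun (congrArg (fun x => x.1.2) h) t
    have hc : p.2 (Fin.last (k + 1)) = q.2 (Fin.last (k + 1)) := congrArg Prod.snd h
    refine Prod.ext ha (funext fun t => ?_)
    induction t using Fin.lastCases with
    | last => exact hc
    | cast t => exact hb t
  have hfg : ∀ p ∈ S3,
      (∏ t : Fin (k + 2), φ (max (p.2 t : ℕ) (p.1 : ℕ))) = g (e p) := by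
    intro p hp
    have hp' := Finset.mem_filter.mp hp
    rw [Fin.prod_univ_castSucc]
    have : max ((p.2 (Fin.last (k + 1)) : ℕ)) (p.1 : ℕ) = (p.2 (Fin.last (k + 1)) : ℕ) :=
      max_eq_left (hp'.2.2 _)
    rw [this]
  have hsub : S3.image e ⊆ S2 ×ˢ Finset.univ := by
    intro q hq
    obtain ⟨p, hp, rfl⟩ := Finset.mem_image.mp hq
    have hp' := Finset.mem_filter.mp hp
    refine Finset.mem_product.mpr ⟨Finset.mem_filter.mpr ⟨Finset.mem_univ _, ?_, ?_⟩,
      Finset.mem_univ _⟩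
    · intro a b hab
      exact hp'.2.1 (Fin.castSucc_le_castSucc_iff.mpr hab)
    · intro t
      exact hp'.2.2 t.castSucc
  have hkey : Delta φ n (k + 3) ≤ ∑ q ∈ S2 ×ˢ Finset.univ, g q := by
    rw [h3, Finset.sum_congr rfl hfg, ← Finset.sum_image (fun x _ y _ h => hinj h)]
    refine Finset.sum_le_sum_of_subset_of_nonneg hsub ?_
    intro q _ _
    exact mul_nonneg (Finset.prod_nonneg fun t _ => hφ0 _) (hφ0 _)
  calc Delta φ n (k + 3) ≤ ∑ q ∈ S2 ×ˢ Finset.univ, g q := hkey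
    _ = (∑ p ∈ S2, ∏ t : Fin (k + 1), φ (max (p.2 t : ℕ) (p.1 : ℕ)))
        * (∑ j : Fin (n + 1), φ (j : ℕ)) := by
      rw [Finset.sum_product, Finset.sum_mul]
      exact Finset.sum_congr rfl fun p _ => by rw [Finset.mul_sum]
    _ = (∑ i ∈ Finset.range (n + 1), φ i) * Delta φ n (k + 2) := by
      rw [Fin.sum_univ_eq_sum_range, h2, mul_comm]

lemma Delta_iter (φ : ℕ → ℝ) (hφ0 : ∀ m, 0 ≤ φ m) (n : ℕ) :
    ∀ k : ℕ, Delta φ n (k + 3) ≤ (∑ i ∈ Finset.range (n + 1), φ i) ^ k * Delta φ n 3 := by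
  intro k
  induction k with
  | zero => simp
  | succ k ih =>
    have hG : 0 ≤ ∑ i ∈ Finset.range (n + 1), φ i :=
      Finset.sum_nonneg fun i _ => hφ0 i
    calc Delta φ n (k + 1 + 3) = Delta φ n (k + 4) := by ring_nf
      _ ≤ (∑ i ∈ Finset.range (n + 1), φ i) * Delta φ n (k + 3) := Delta_step φ hφ0 n (k + 1)
      _ ≤ (∑ i ∈ Finset.range (n + 1), φ i) *
          ((∑ i ∈ Finset.range (n + 1), φ i) ^ k * Delta φ n 3) :=
        mul_le_mul_of_nonneg_left ih hG
      _ = (∑ i ∈ Finset.range (n + 1), φ i) ^ (k + 1) * Delta φ n 3 := by ring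

/-- For non-increasing `φ ≥ 0`, with `G_n = ∑_{i=0}^n φ(i)`, one has
`Δ_{n,v} ≤ G_n Δ_{n,v-1}` and `Δ_{n,v} ≤ G_n^{v-3} Δ_{n,3}` for `v ≥ 3`. -/
theorem stmt_3 (φ : ℕ → ℝ) (hφ : Antitone φ) (hφ0 : ∀ m, 0 ≤ φ m) (n : ℕ) :
    ∀ v : ℕ, 3 ≤ v →
      Delta φ n v ≤ (∑ i ∈ Finset.range (n + 1), φ i) * Delta φ n (v - 1)
      ∧ Delta φ n v ≤ (∑ i ∈ Finset.range (n + 1), φ i) ^ (v - 3) * Delta φ n 3 := by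
  intro v hv
  obtain ⟨k, rfl⟩ := Nat.exists_eq_add_of_le' hv
  constructor
  · show Delta φ n (k + 3) ≤ _ * Delta φ n (k + 3 - 1)
    have : k + 3 - 1 = k + 2 := rfl
    rw [this]
    exact Delta_step φ hφ0 n k
  · show Delta φ n (k + 3) ≤ _ ^ (k + 3 - 3) * Delta φ n 3
    have : k + 3 - 3 = k := rfl
    rw [this]
    exact Delta_iter φ hφ0 n k
end

section
/- Let S^{(1)}, …, S^{(v)} be independent copies of a ℤ^d-valued random walk, suppose sup_x P(S_m = x) ≤ φ(m) with φ non-increasing, and P(S_u ± S'_v = 0) ≤ φ(u+v) for independent copies S, S'. Then for any 0 ≤ j_1 ≤ ⋯ ≤ j_v and signs δ_t ∈ {−1, +1}, ∑_{x ∈ ℤ^d} ∏_{t=1}^v P(S^{(t)}_{j_t} = δ_t x) ≤ ∏_{t=2}^v φ(j_t ∨ j_1). -/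
/-!
Bound every factor with `t ≥ 2` by its maximal point probability `φ (j t)` and keep the first
two factors: after the substitution `x ↦ δ₀ x` what is left is `P(S_{j₀} = δ₀ δ₁ S'_{j₁})`,
which is at most `φ (j₀ + j₁) ≤ φ (j₁)`. Since `j` is monotone, `j t ∨ j₀ = j t`.
For `v = 0` the sum is the total mass `1` of a single law.
-/

open Finset

theorem PMF.summable_toReal {α : Type*} (q : PMF α) : Summable fun x => (q x).toReal :=
  ENNReal.summable_toReal (q.tsum_coe ▸ ENNReal.one_ne_top)

theorem PMF.tsum_toReal {α : Type*} (q : PMF α) : ∑' x, (q x).toReal = 1 := by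
  rw [← ENNReal.tsum_toReal_eq q.apply_ne_top, q.tsum_coe, ENNReal.toReal_one]

section SignChange

variable {ι R : Type*} [CommMonoid R] {ε : R}

theorem involutive_mul_left_of_mul_self_eq_one (hε : ε * ε = 1) :
    Function.Involutive fun x : ι → R => fun i => ε * x i := by
  intro x
  funext i
  simp only [← mul_assoc, hε, one_mul]

theorem summable_comp_mul_left_iff {β : Type*} [AddCommMonoid β] [TopologicalSpace β]
    {f : (ι → R) → β} (hε : ε * ε = 1) :
    Summable (fun x : ι → R => f fun i => ε * x i) ↔ Summable f :=
  (involutive_mul_left_of_mul_self_eq_one hε).toPerm.summable_iff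

theorem tsum_comp_mul_left {β : Type*} [AddCommMonoid β] [TopologicalSpace β]
    (f : (ι → R) → β) (hε : ε * ε = 1) :
    ∑' x : ι → R, f (fun i => ε * x i) = ∑' x, f x :=
  (involutive_mul_left_of_mul_self_eq_one hε).toPerm.tsum_eq f

theorem tsum_mul_comp_mul_left (f g : (ι → R) → ℝ) (η : R) (hε : ε * ε = 1) :
    ∑' x : ι → R, f (fun i => ε * x i) * g (fun i => η * x i)
      = ∑' y, f y * g (fun i => ε * η * y i) := by
  rw [← tsum_comp_mul_left (fun y => f y * g fun i => ε * η * y i) hε]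
  refine tsum_congr fun x => congrArg (f _ * g ·) (funext fun i => ?_)
  rw [← mul_assoc, mul_right_comm ε η ε, hε, one_mul]

end SignChange

theorem tsum_prod_le_tsum_mul_mul_prod {α ι : Type*} [Fintype ι] [DecidableEq ι]
    {F : ι → α → ℝ} {M : ι → ℝ} {a b : ι} (hab : a ≠ b)
    (hF : ∀ t x, 0 ≤ F t x) (hFM : ∀ t x, F t x ≤ M t) (hsum : Summable (F a)) :
    ∑' x, ∏ t, F t x ≤ (∑' x, F a x * F b x) * ∏ t ∈ (univ.erase a).erase b, M t := by
  have hb : b ∈ univ.erase a := mem_erase.2 ⟨hab.symm, mem_univ b⟩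
  have hsplit : ∀ x, ∏ t, F t x = F a x * F b x * ∏ t ∈ (univ.erase a).erase b, F t x := by
    intro x
    rw [← mul_prod_erase univ (F · x) (mem_univ a), ← mul_prod_erase _ (F · x) hb, mul_assoc]
  have hpoint : ∀ x, ∏ t, F t x ≤ F a x * F b x * ∏ t ∈ (univ.erase a).erase b, M t := by
    intro x
    rw [hsplit x]
    exact mul_le_mul_of_nonneg_left (prod_le_prod (fun t _ => hF t x) fun t _ => hFM t x)
      (mul_nonneg (hF a x) (hF b x))
  have hsum_ab : Summable fun x => F a x * F b x :=
    (hsum.mul_right (M b)).of_nonneg_of_le (fun x => mul_nonneg (hF a x) (hF b x))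
      fun x => mul_le_mul_of_nonneg_left (hFM b x) (hF a x)
  have hsum_prod : Summable fun x => ∏ t, F t x :=
    (hsum_ab.mul_right _).of_nonneg_of_le (fun x => prod_nonneg fun t _ => hF t x) hpoint
  calc ∑' x, ∏ t, F t x
      ≤ ∑' x, F a x * F b x * ∏ t ∈ (univ.erase a).erase b, M t :=
        hsum_prod.tsum_le_tsum hpoint (hsum_ab.mul_right _)
    _ = _ := tsum_mul_right

/-- If `p m` is the law of `S_m`, `sup_x P(S_m = x) ≤ φ(m)` with `φ` non-increasing, and
`P(S_u = ε S'_w) ≤ φ(u+w)` for independent copies and signs `ε = ±1`, then for any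
`0 ≤ j_1 ≤ ⋯ ≤ j_v` and signs `δ_t ∈ {±1}`,
`∑_x ∏_t P(S^{(t)}_{j_t} = δ_t x) ≤ ∏_{t=2}^v φ(j_t ∨ j_1)`. -/
theorem stmt_4 {d : ℕ} (p : ℕ → PMF (Fin d → ℤ)) (φ : ℕ → ℝ) (hφ : Antitone φ)
    (hsup : ∀ m : ℕ, ∀ x : Fin d → ℤ, (p m x).toReal ≤ φ m)
    (hconv : ∀ u w : ℕ, ∀ ε : ℤ, (ε = 1 ∨ ε = -1) →
      (∑' x : Fin d → ℤ, (p u x).toReal * (p w (fun i => ε * x i)).toReal) ≤ φ (u + w)) :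
    ∀ (v : ℕ) (j : Fin (v + 1) → ℕ), Monotone j →
      ∀ δ : Fin (v + 1) → ℤ, (∀ t, δ t = 1 ∨ δ t = -1) →
        (∑' x : Fin d → ℤ, ∏ t : Fin (v + 1), (p (j t) (fun i => δ t * x i)).toReal)
          ≤ ∏ t ∈ Finset.univ.erase (0 : Fin (v + 1)), φ (max (j t) (j 0)) := by
  intro v j hj δ hδ
  have hδ_sq : ∀ t, δ t * δ t = 1 := fun t => mul_self_eq_one_iff.2 (hδ t)
  have hφ_nonneg : ∀ m, 0 ≤ φ m := fun m => ENNReal.toReal_nonneg.trans (hsup m 0)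
  rcases v with _ | n
  · have hempty : univ.erase (0 : Fin 1) = ∅ := by decide
    simp only [Fin.prod_univ_succ, Fin.prod_univ_zero, mul_one, hempty, prod_empty]
    rw [tsum_comp_mul_left (fun x => (p (j 0) x).toReal) (hδ_sq 0), PMF.tsum_toReal]
  · have hsign : δ 0 * δ 1 = 1 ∨ δ 0 * δ 1 = -1 :=
      mul_self_eq_one_iff.1 (by rw [mul_mul_mul_comm, hδ_sq, hδ_sq, one_mul])
    have hpair : ∑' x : Fin d → ℤ, (p (j 0) (fun i => δ 0 * x i)).toReal
        * (p (j 1) (fun i => δ 1 * x i)).toReal ≤ φ (j 1) := by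
      rw [tsum_mul_comp_mul_left (fun y => (p (j 0) y).toReal) (fun y => (p (j 1) y).toReal)
        _ (hδ_sq 0)]
      exact (hconv _ _ _ hsign).trans (hφ (Nat.le_add_left _ _))
    have hsum0 : Summable fun x : Fin d → ℤ => (p (j 0) (fun i => δ 0 * x i)).toReal :=
      (summable_comp_mul_left_iff (hδ_sq 0)).2 (p (j 0)).summable_toReal
    have hb : (1 : Fin (n + 1 + 1)) ∈ univ.erase 0 := mem_erase.2 ⟨one_ne_zero, mem_univ 1⟩
    calc _ ≤ (∑' x : Fin d → ℤ, (p (j 0) (fun i => δ 0 * x i)).toReal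
            * (p (j 1) (fun i => δ 1 * x i)).toReal)
            * ∏ t ∈ (univ.erase 0).erase 1, φ (j t) :=
          tsum_prod_le_tsum_mul_mul_prod
            (F := fun t (x : Fin d → ℤ) => (p (j t) (fun i => δ t * x i)).toReal)
            zero_ne_one (fun _ _ => ENNReal.toReal_nonneg) (fun _ _ => hsup _ _) hsum0
      _ ≤ φ (j 1) * ∏ t ∈ (univ.erase 0).erase 1, φ (j t) :=
          mul_le_mul_of_nonneg_right hpair (prod_nonneg fun _ _ => hφ_nonneg _)
      _ = ∏ t ∈ univ.erase 0, φ (max (j t) (j 0)) := by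
          rw [mul_prod_erase _ (fun t => φ (j t)) hb]
          exact prod_congr rfl fun t _ => by rw [max_eq_left (hj (Fin.zero_le t))]
end

section
/- Let h : (0,1] → ℝ be defined by h(r) = (1 + log(1/r))^{1−γ} with 0 ≤ γ < 1. Then there exists a constant c > 0 such that for all n ≥ 2, ∫_0^1 exp(−n r (1 + log(1/r))^{1−γ}) dr ≤ c / (n (log n)^{1−γ}). -/
/-!
Split the integral at `r = N^{-1/2}`. For smaller `r`, `log (1/r) ≥ (log N)/2`, so the weight
`(1 + log (1/r))^p` is at least `(log N)^p / 2` and the integrand is dominated by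
`exp (-N (log N)^p r / 2)`, whose integral over `[0, 1]` is at most `2 / (N (log N)^p)`. For larger
`r`, `N r ≥ √N` and the integrand is at most `exp (-√N) = O(N^{-2})`, which is negligible because
`(log N)^p ≤ N`.
-/

open Real MeasureTheory

lemma integral_exp_neg_mul_le_inv {k : ℝ} (hk : 0 < k) :
    ∫ r in (0:ℝ)..1, exp (-(k * r)) ≤ k⁻¹ := by
  have hsub : ∫ r in (0:ℝ)..1, exp (-(k * r)) = k⁻¹ * ∫ x in (0:ℝ)..k, exp (-x) := by
    simpa using intervalIntegral.integral_comp_mul_left (fun x => exp (-x)) (a := 0) (b := 1) hk.ne'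
  have hval : ∫ x in (0:ℝ)..k, exp (-x) = 1 - exp (-k) := by
    simp [intervalIntegral.integral_comp_neg (fun x => exp x), integral_exp]
  rw [hsub, hval]
  exact mul_le_of_le_one_right (inv_nonneg.2 hk.le) (by linarith [exp_pos (-k)])

lemma exp_neg_sqrt_le {x : ℝ} (hx : 0 < x) : exp (-√x) ≤ 24 / x ^ 2 := by
  have h : x ^ 2 / 24 ≤ exp √x := by
    have := pow_div_factorial_le_exp √x (sqrt_nonneg x) 4
    rwa [show √x ^ 4 = x ^ 2 by rw [show 4 = 2 * 2 by rfl, pow_mul, sq_sqrt hx.le],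
      show ((Nat.factorial 4 : ℕ) : ℝ) = 24 by norm_num [Nat.factorial]] at this
  rw [exp_neg, ← inv_div]
  exact inv_anti₀ (by positivity) h

lemma log_rpow_le_self {p N : ℝ} (hp0 : 0 ≤ p) (hp1 : p ≤ 1) (hN : 1 ≤ N) :
    log N ^ p ≤ N := calc
  log N ^ p ≤ (1 + log N) ^ p := rpow_le_rpow (log_nonneg hN) (by linarith) hp0
  _ ≤ 1 + log N := rpow_le_self_of_one_le (by linarith [log_nonneg hN]) hp1
  _ ≤ N := by linarith [log_le_sub_one_of_pos (zero_lt_one.trans_le hN)]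

lemma half_log_rpow_le_of_le_inv_sqrt {p N r : ℝ} (hp0 : 0 ≤ p) (hp1 : p ≤ 1) (hN : 1 ≤ N)
    (hr0 : 0 < r) (hr : r ≤ 1 / √N) : log N ^ p / 2 ≤ (1 + log (1 / r)) ^ p := by
  have hlogN := log_nonneg hN
  have hsqrt : √N ≤ 1 / r := by
    rwa [le_div_iff₀ hr0, mul_comm, ← le_div_iff₀ (sqrt_pos.2 (by linarith))]
  have hlog : log N / 2 ≤ 1 + log (1 / r) := by
    have := log_le_log (sqrt_pos.2 (by linarith)) hsqrt
    rw [log_sqrt (by linarith)] at this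
    linarith
  calc log N ^ p / 2 ≤ (1 / 2) ^ p * log N ^ p := by
        have : (1 / 2 : ℝ) ≤ (1 / 2) ^ p := by
          simpa using rpow_le_rpow_of_exponent_ge (by norm_num : (0:ℝ) < 1 / 2) (by norm_num) hp1
        nlinarith [rpow_nonneg hlogN p]
    _ = (log N / 2) ^ p := by rw [← mul_rpow (by norm_num) hlogN]; ring_nf
    _ ≤ (1 + log (1 / r)) ^ p := rpow_le_rpow (by positivity) hlog hp0

lemma exp_neg_mul_rpow_log_le {p N r : ℝ} (hp0 : 0 ≤ p) (hp1 : p ≤ 1) (hN : 1 ≤ N)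
    (hr0 : 0 < r) (hr1 : r ≤ 1) :
    exp (-N * r * (1 + log (1 / r)) ^ p) ≤ exp (-(N * (log N ^ p / 2) * r)) + exp (-√N) := by
  have hNr : 0 ≤ N * r := by positivity
  rcases le_or_gt r (1 / √N) with hsmall | hlarge
  · have := half_log_rpow_le_of_le_inv_sqrt hp0 hp1 hN hr0 hsmall
    have : exp (-N * r * (1 + log (1 / r)) ^ p) ≤ exp (-(N * (log N ^ p / 2) * r)) :=
      exp_le_exp.2 (by nlinarith)
    linarith [exp_pos (-√N)]
  · have hsqrt : √N ≤ N * r := by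
      have hs := sqrt_pos.2 (zero_lt_one.trans_le hN)
      rw [div_lt_iff₀ hs] at hlarge
      nlinarith [mul_self_sqrt (zero_le_one.trans hN)]
    have hweight : 1 ≤ (1 + log (1 / r)) ^ p :=
      one_le_rpow (by linarith [log_nonneg (one_le_one_div hr0 hr1)]) hp0
    have : exp (-N * r * (1 + log (1 / r)) ^ p) ≤ exp (-√N) := exp_le_exp.2 (by nlinarith)
    linarith [exp_pos (-(N * (log N ^ p / 2) * r))]

lemma integral_exp_neg_mul_rpow_log_le {p N : ℝ} (hp0 : 0 ≤ p) (hp1 : p ≤ 1) (hN : 1 < N) :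
    ∫ r in (0:ℝ)..1, exp (-N * r * (1 + log (1 / r)) ^ p) ≤ 26 / (N * log N ^ p) := by
  set P := log N ^ p
  have hP : 0 < P := rpow_pos_of_pos (log_pos hN) p
  have hN0 : 0 < N := by linarith
  have hdom : IntervalIntegrable (fun r => exp (-(N * (P / 2) * r)) + exp (-√N)) volume 0 1 :=
    (by fun_prop : Continuous _).intervalIntegrable 0 1
  calc ∫ r in (0:ℝ)..1, exp (-N * r * (1 + log (1 / r)) ^ p)
      ≤ ∫ r in (0:ℝ)..1, (exp (-(N * (P / 2) * r)) + exp (-√N)) := by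
        simp only [intervalIntegral.integral_of_le zero_le_one]
        refine integral_mono_of_nonneg (.of_forall fun r => (exp_pos _).le)
          ((intervalIntegrable_iff_integrableOn_Ioc_of_le zero_le_one).1 hdom) ?_
        filter_upwards [ae_restrict_mem measurableSet_Ioc] with r ⟨hr0, hr1⟩
        exact exp_neg_mul_rpow_log_le hp0 hp1 hN.le hr0 hr1
    _ = (∫ r in (0:ℝ)..1, exp (-(N * (P / 2) * r))) + exp (-√N) := by
        rw [intervalIntegral.integral_add
          ((by fun_prop : Continuous _).intervalIntegrable 0 1) intervalIntegrable_const]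
        simp
    _ ≤ (N * (P / 2))⁻¹ + 24 / N ^ 2 :=
        add_le_add (integral_exp_neg_mul_le_inv (by positivity)) (exp_neg_sqrt_le hN0)
    _ ≤ 2 / (N * P) + 24 / (N * P) := by
        gcongr
        · exact le_of_eq (by field_simp)
        · rw [sq]; gcongr; exact log_rpow_le_self hp0 hp1 hN.le
    _ = 26 / (N * P) := by ring

/-- Laplace-type estimate: for `0 ≤ γ < 1` there is `c > 0` such that for `n ≥ 2`,
`∫_0^1 exp(−n r (1 + log(1/r))^{1−γ}) dr ≤ c / (n (log n)^{1−γ})`. -/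
theorem stmt_6 (γ : ℝ) (hγ0 : 0 ≤ γ) (hγ1 : γ < 1) :
    ∃ c : ℝ, 0 < c ∧ ∀ n : ℕ, 2 ≤ n →
      (∫ r in (0 : ℝ)..1, Real.exp (-(n : ℝ) * r * (1 + Real.log (1 / r)) ^ (1 - γ)))
        ≤ c / ((n : ℝ) * Real.log n ^ (1 - γ)) := by
  refine ⟨26, by norm_num, fun n hn => ?_⟩
  have hN : (1 : ℝ) < n := by exact_mod_cast hn
  exact integral_exp_neg_mul_rpow_log_le (by linarith) (by linarith) hN
end

section
/- Let (ε_n)_{n≥1} be a sequence of positive reals with ε_n → 0. Then there exists a monotone non-increasing slowly varying function h : ℕ → (0,∞) with h_n → 0 and ε_n ≤ h_n for all n, where slowly varying means h_{2n}/h_n → 1 as n → ∞. -/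
open Filter Topology

/-!
Put `ψ n = log₂ n + 1` and `h n = sup_k min (ε k) (ε k ψ k / ψ n)`: each `ε k` is carried forward
to later indices, damped by the factor `ψ k / ψ n`. Then `h ≥ ε`, `h` is non-increasing, and
`ψ n h n` is non-decreasing, so `1 ≥ h (2n) / h n ≥ ψ n / ψ (2n) → 1`. Since `ψ → ∞` the damped
contribution of any finite set of indices dies out, while the remaining ones are small because
`ε → 0`.
-/

def SlowlyVarying (f : ℕ → ℝ) : Prop :=
  Tendsto (fun n => f (2 * n) / f n) atTop (𝓝 1)

noncomputable def slowMajorant (ε ψ : ℕ → ℝ) (n : ℕ) : ℝ :=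
  ⨆ k, min (ε k) (ε k * ψ k / ψ n)

section

variable {ε ψ : ℕ → ℝ}

lemma bddAbove_slowMajorant_terms (hε : BddAbove (Set.range ε)) (n : ℕ) :
    BddAbove (Set.range fun k => min (ε k) (ε k * ψ k / ψ n)) := by
  obtain ⟨C, hC⟩ := hε
  exact ⟨C, by rintro _ ⟨k, rfl⟩; exact (min_le_left _ _).trans (hC ⟨k, rfl⟩)⟩

lemma le_slowMajorant (hε : BddAbove (Set.range ε)) {n : ℕ} (hψ : ψ n ≠ 0) :
    ε n ≤ slowMajorant ε ψ n :=
  le_ciSup_of_le (bddAbove_slowMajorant_terms hε n) n <| by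
    rw [mul_div_cancel_right₀ _ hψ, min_self]

lemma antitone_slowMajorant (hε : BddAbove (Set.range ε)) (hε0 : ∀ k, 0 ≤ ε k)
    (hψ0 : ∀ n, 0 < ψ n) (hψ : Monotone ψ) : Antitone (slowMajorant ε ψ) := fun m _ hmn =>
  ciSup_mono (bddAbove_slowMajorant_terms hε m) fun k => min_le_min le_rfl <|
    div_le_div_of_nonneg_left (mul_nonneg (hε0 k) (hψ0 k).le) (hψ0 m) (hψ hmn)

lemma mul_slowMajorant_le_mul_slowMajorant (hε : BddAbove (Set.range ε)) (hε0 : ∀ k, 0 ≤ ε k)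
    (hψ0 : ∀ n, 0 < ψ n) {m n : ℕ} (hmn : ψ m ≤ ψ n) :
    ψ m * slowMajorant ε ψ m ≤ ψ n * slowMajorant ε ψ n := by
  have hq : 0 ≤ ψ n / ψ m := div_nonneg (hψ0 n).le (hψ0 m).le
  rw [← le_div_iff₀' (hψ0 m), mul_div_right_comm]
  refine ciSup_le fun k => ?_
  have hterm : ψ n / ψ m * min (ε k) (ε k * ψ k / ψ n) =
      min (ψ n / ψ m * ε k) (ε k * ψ k / ψ m) := by
    rw [mul_min_of_nonneg _ _ hq]
    congr 1
    field_simp [(hψ0 n).ne', (hψ0 m).ne']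
  calc min (ε k) (ε k * ψ k / ψ m)
      ≤ ψ n / ψ m * min (ε k) (ε k * ψ k / ψ n) := by
        rw [hterm]
        exact min_le_min (le_mul_of_one_le_left (hε0 k) ((one_le_div (hψ0 m)).2 hmn)) le_rfl
    _ ≤ ψ n / ψ m * slowMajorant ε ψ n :=
        mul_le_mul_of_nonneg_left (le_ciSup (bddAbove_slowMajorant_terms hε n) k) hq

lemma tendsto_slowMajorant_zero (hε : Tendsto ε atTop (𝓝 0)) (hε0 : ∀ k, 0 ≤ ε k)
    (hψ0 : ∀ n, 0 < ψ n) (hψ : Tendsto ψ atTop atTop) :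
    Tendsto (slowMajorant ε ψ) atTop (𝓝 0) := by
  refine tendsto_order.2 ⟨fun a ha => Eventually.of_forall fun n =>
    ha.trans_le ((hε0 n).trans (le_slowMajorant hε.bddAbove_range (hψ0 n).ne')), fun a ha => ?_⟩
  obtain ⟨N, hN⟩ := eventually_atTop.1 (hε.eventually (ge_mem_nhds (half_pos ha)))
  set C := ∑ k ∈ Finset.range N, ε k * ψ k
  have hC : ∀ᶠ n in atTop, C / ψ n ≤ a / 2 :=
    (tendsto_const_nhds.div_atTop hψ).eventually (ge_mem_nhds (half_pos ha))
  filter_upwards [hC] with n hn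
  refine (ciSup_le fun k => ?_).trans_lt (half_lt_self ha)
  rcases lt_or_ge k N with hk | hk
  · refine (min_le_right _ _).trans (hn.trans' ?_)
    gcongr
    · exact (hψ0 n).le
    · exact Finset.single_le_sum (fun i _ => mul_nonneg (hε0 i) (hψ0 i).le)
        (Finset.mem_range.2 hk)
  · exact (min_le_left _ _).trans (hN k hk)

lemma slowlyVarying_slowMajorant (hε : BddAbove (Set.range ε)) (hε0 : ∀ k, 0 < ε k)
    (hψ0 : ∀ n, 0 < ψ n) (hψ : Monotone ψ) (hψ2 : SlowlyVarying ψ) :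
    SlowlyVarying (slowMajorant ε ψ) := by
  have hε0' : ∀ k, 0 ≤ ε k := fun k => (hε0 k).le
  have hpos : ∀ n, 0 < slowMajorant ε ψ n :=
    fun n => (hε0 n).trans_le (le_slowMajorant hε (hψ0 n).ne')
  have hlower : Tendsto (fun n => (ψ (2 * n) / ψ n)⁻¹) atTop (𝓝 1) := by
    simpa using hψ2.inv₀ one_ne_zero
  refine tendsto_of_tendsto_of_tendsto_of_le_of_le hlower tendsto_const_nhds (fun n => ?_)
    fun n => (div_le_one (hpos n)).2 (antitone_slowMajorant hε hε0' hψ0 hψ (by omega))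
  rw [inv_div, div_le_div_iff₀ (hψ0 _) (hpos n), mul_comm _ (ψ (2 * n))]
  exact mul_slowMajorant_le_mul_slowMajorant hε hε0' hψ0 (hψ (by omega))

end

noncomputable def log2Succ (n : ℕ) : ℝ := Nat.log 2 n + 1

lemma log2Succ_pos (n : ℕ) : 0 < log2Succ n := by unfold log2Succ; positivity

lemma log2Succ_monotone : Monotone log2Succ := fun _ _ h => by
  unfold log2Succ; gcongr

lemma tendsto_log2Succ : Tendsto log2Succ atTop atTop := by
  refine tendsto_atTop_add_const_right _ 1 (tendsto_natCast_atTop_atTop.comp ?_)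
  exact tendsto_atTop_atTop.2 fun b => ⟨2 ^ b, fun n hn => Nat.le_log_of_pow_le one_lt_two hn⟩

lemma log2Succ_two_mul {n : ℕ} (hn : n ≠ 0) : log2Succ (2 * n) = log2Succ n + 1 := by
  simp only [log2Succ, mul_comm 2 n, Nat.log_mul_base one_lt_two hn, Nat.cast_succ]

lemma slowlyVarying_log2Succ : SlowlyVarying log2Succ := by
  have h := (tendsto_log2Succ.inv_tendsto_atTop).const_add 1
  rw [add_zero] at h
  refine h.congr' (eventually_ne_atTop 0 |>.mono fun n hn => ?_)
  dsimp only [Pi.inv_apply]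
  rw [log2Succ_two_mul hn, add_div, div_self (log2Succ_pos n).ne', one_div]

/-- Any positive null sequence is dominated by a monotone non-increasing slowly varying
null sequence `h` (slowly varying: `h(2n)/h(n) → 1`). -/
theorem stmt_8 (ε : ℕ → ℝ) (hpos : ∀ n, 0 < ε n) (hlim : Tendsto ε atTop (nhds 0)) :
    ∃ h : ℕ → ℝ, (∀ n, 0 < h n) ∧ Antitone h ∧ Tendsto h atTop (nhds 0)
      ∧ (∀ n, ε n ≤ h n)
      ∧ Tendsto (fun n => h (2 * n) / h n) atTop (nhds 1) := by
  have hbdd := hlim.bddAbove_range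
  have hle : ∀ n, ε n ≤ slowMajorant ε log2Succ n :=
    fun n => le_slowMajorant hbdd (log2Succ_pos n).ne'
  exact ⟨slowMajorant ε log2Succ, fun n => (hpos n).trans_le (hle n),
    antitone_slowMajorant hbdd (fun k => (hpos k).le) log2Succ_pos log2Succ_monotone,
    tendsto_slowMajorant_zero hlim (fun k => (hpos k).le) log2Succ_pos tendsto_log2Succ, hle,
    slowlyVarying_slowMajorant hbdd hpos log2Succ_pos log2Succ_monotone
      slowlyVarying_log2Succ⟩
end

section
/- Let φ(m) = T/(m ∨ 1) and ψ(m,k) = T·min(k,m)/(m ∨ 1)², with T > 0 and α ≥ 2 an integer. Then n·(∑_{i=0}^{n−1}φ(i))^{2α−4}·∑_{i,j,k=0}^{n−1}[φ(j∨i)φ(k∨i) + φ(j)ψ(i+k,j)] ≤ C·T^{2α−2}·n²·(log n)^{2α−4} for all n ≥ 2, where C depends only on α. -/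
open Finset

/-- `φ(m) = T/(m ∨ 1)`. -/
noncomputable def phiOne (T : ℝ) (m : ℕ) : ℝ := T / ((max m 1 : ℕ) : ℝ)

/-- `ψ(m,k) = T min(k,m)/(m ∨ 1)²`. -/
noncomputable def psiOne (T : ℝ) (m k : ℕ) : ℝ :=
  T * ((min k m : ℕ) : ℝ) / (((max m 1 : ℕ) : ℝ)) ^ 2

namespace Stmt13Aux

/-- `N m = (m ∨ 1 : ℝ)`. -/
noncomputable def N (m : ℕ) : ℝ := ((max m 1 : ℕ) : ℝ)

lemma one_le_N (m : ℕ) : 1 ≤ N m := by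
  unfold N; exact_mod_cast Nat.le_max_right m 1

lemma N_pos (m : ℕ) : 0 < N m := lt_of_lt_of_le one_pos (one_le_N m)

lemma cast_le_N (m : ℕ) : (m : ℝ) ≤ N m := by
  unfold N; exact_mod_cast Nat.le_max_left m 1

lemma N_mono {a b : ℕ} (h : a ≤ b) : N a ≤ N b := by
  unfold N; exact_mod_cast max_le_max h le_rfl

lemma N_succ (i : ℕ) : N (i + 1) = (i : ℝ) + 1 := by
  unfold N
  rw [Nat.max_eq_left (Nat.succ_le_succ (Nat.zero_le i))]
  push_cast; ring

lemma N_zero : N 0 = 1 := by unfold N; norm_num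

/-- `f m = (m ∨ 1)^{-1/2}`. -/
noncomputable def f (m : ℕ) : ℝ := (Real.sqrt (N m))⁻¹

/-- `g m = (m ∨ 1)^{-3/4}`. -/
noncomputable def g (m : ℕ) : ℝ := (Real.sqrt (N m) * Real.sqrt (Real.sqrt (N m)))⁻¹

lemma sqrtN_pos (m : ℕ) : 0 < Real.sqrt (N m) := Real.sqrt_pos.mpr (N_pos m)

lemma sqrtsqrtN_pos (m : ℕ) : 0 < Real.sqrt (Real.sqrt (N m)) :=
  Real.sqrt_pos.mpr (sqrtN_pos m)

lemma f_nonneg (m : ℕ) : 0 ≤ f m := inv_nonneg.mpr (Real.sqrt_nonneg _)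

lemma g_pos (m : ℕ) : 0 < g m :=
  inv_pos.mpr (mul_pos (sqrtN_pos m) (sqrtsqrtN_pos m))

lemma g_nonneg (m : ℕ) : 0 ≤ g m := (g_pos m).le

/-- telescoping step for `∑ m^{-1/2}` -/
lemma sqrt_step (i : ℕ) :
    (Real.sqrt ((i : ℝ) + 1))⁻¹ ≤ 2 * (Real.sqrt ((i : ℝ) + 1) - Real.sqrt i) := by
  set a := Real.sqrt ((i : ℝ) + 1) with ha'
  set b := Real.sqrt (i : ℝ) with hb'
  have ha : a * a = (i : ℝ) + 1 := Real.mul_self_sqrt (by positivity)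
  have hb : b * b = (i : ℝ) := Real.mul_self_sqrt (by positivity)
  have hab : b ≤ a := Real.sqrt_le_sqrt (by linarith)
  have ha0 : 0 < a := Real.sqrt_pos.mpr (by positivity)
  rw [inv_eq_one_div, div_le_iff₀ ha0]
  nlinarith [sq_nonneg (a - b)]

/-- telescoping step for `∑ m^{-3/4}` -/
lemma sqrt4_step (i : ℕ) :
    (Real.sqrt ((i : ℝ) + 1) * Real.sqrt (Real.sqrt ((i : ℝ) + 1)))⁻¹ ≤
      4 * (Real.sqrt (Real.sqrt ((i : ℝ) + 1)) - Real.sqrt (Real.sqrt (i : ℝ))) := by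
  set a := Real.sqrt ((i : ℝ) + 1) with ha'
  set b := Real.sqrt (i : ℝ) with hb'
  set c := Real.sqrt a with hc'
  set d := Real.sqrt b with hd'
  have ha : a * a = (i : ℝ) + 1 := Real.mul_self_sqrt (by positivity)
  have hb : b * b = (i : ℝ) := Real.mul_self_sqrt (by positivity)
  have hab : b ≤ a := Real.sqrt_le_sqrt (by linarith)
  have ha0 : 0 < a := Real.sqrt_pos.mpr (by positivity)
  have hb0 : 0 ≤ b := Real.sqrt_nonneg _
  have hc : c * c = a := Real.mul_self_sqrt ha0.le
  have hd : d * d = b := Real.mul_self_sqrt hb0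
  have hcd : d ≤ c := Real.sqrt_le_sqrt hab
  have hc0 : 0 < c := Real.sqrt_pos.mpr ha0
  have hd0 : 0 ≤ d := Real.sqrt_nonneg _
  rw [inv_eq_one_div, div_le_iff₀ (by positivity)]
  -- 1 ≤ 4 (c - d) * (a * c)
  nlinarith [sq_nonneg (c - d), sq_nonneg (a - b), mul_nonneg (mul_nonneg ha0.le hc0.le) (sq_nonneg (c - d)), mul_nonneg ha0.le (sq_nonneg (c-d)), mul_pos ha0 hc0]

/-- `∑_{m<n} (m∨1)^{-1/2} ≤ 3 √n` -/
lemma sum_f_le (n : ℕ) (hn : 1 ≤ n) :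
    ∑ m ∈ range n, f m ≤ 3 * Real.sqrt n := by
  obtain ⟨k, rfl⟩ := Nat.exists_eq_add_of_le hn
  rw [add_comm, Finset.sum_range_succ']
  have h0 : f 0 = 1 := by simp [f, N_zero]
  have hstep : ∀ i ∈ range k, f (i + 1) ≤ 2 * (Real.sqrt ((i : ℝ) + 1) - Real.sqrt i) := by
    intro i _
    rw [f, N_succ]
    exact sqrt_step i
  have h1 : ∑ i ∈ range k, f (i + 1) ≤ 2 * Real.sqrt k := by
    calc ∑ i ∈ range k, f (i + 1)
        ≤ ∑ i ∈ range k, 2 * (Real.sqrt ((i : ℝ) + 1) - Real.sqrt i) :=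
          Finset.sum_le_sum hstep
      _ = 2 * ∑ i ∈ range k, (Real.sqrt ((i : ℝ) + 1) - Real.sqrt i) := by
          rw [Finset.mul_sum]
      _ = 2 * Real.sqrt k := by
          have := Finset.sum_range_sub (fun i : ℕ => Real.sqrt (i : ℝ)) k
          simp only [Nat.cast_add, Nat.cast_one] at this ⊢
          rw [this]; simp
  have hk1 : (1 : ℝ) ≤ Real.sqrt ((k : ℝ) + 1) := by
    have h := Real.sqrt_le_sqrt (show (1:ℝ) ≤ (k:ℝ)+1 by linarith [show (0:ℝ) ≤ (k:ℝ) from Nat.cast_nonneg k])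
    rwa [Real.sqrt_one] at h
  have hkk : Real.sqrt (k : ℝ) ≤ Real.sqrt ((k : ℝ) + 1) := Real.sqrt_le_sqrt (by linarith)
  have : ((k + 1 : ℕ) : ℝ) = (k : ℝ) + 1 := by push_cast; ring
  rw [h0, this]
  linarith

/-- `∑_{m<n} (m∨1)^{-3/4} ≤ 5 n^{1/4}` -/
lemma sum_g_le (n : ℕ) (hn : 1 ≤ n) :
    ∑ m ∈ range n, g m ≤ 5 * Real.sqrt (Real.sqrt n) := by
  obtain ⟨k, rfl⟩ := Nat.exists_eq_add_of_le hn
  rw [add_comm, Finset.sum_range_succ']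
  have h0 : g 0 = 1 := by simp [g, N_zero]
  have h1 : ∑ i ∈ range k, g (i + 1) ≤ 4 * Real.sqrt (Real.sqrt k) := by
    calc ∑ i ∈ range k, g (i + 1)
        ≤ ∑ i ∈ range k, 4 * (Real.sqrt (Real.sqrt ((i : ℝ) + 1)) - Real.sqrt (Real.sqrt (i : ℝ))) := by
          refine Finset.sum_le_sum fun i _ => ?_
          rw [g, N_succ]
          exact sqrt4_step i
      _ = 4 * ∑ i ∈ range k, (Real.sqrt (Real.sqrt ((i : ℝ) + 1)) - Real.sqrt (Real.sqrt (i : ℝ))) := by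
          rw [Finset.mul_sum]
      _ = 4 * Real.sqrt (Real.sqrt k) := by
          have := Finset.sum_range_sub (fun i : ℕ => Real.sqrt (Real.sqrt (i : ℝ))) k
          simp only [Nat.cast_add, Nat.cast_one] at this ⊢
          rw [this]; simp
  have hk1 : (1 : ℝ) ≤ Real.sqrt (Real.sqrt ((k : ℝ) + 1)) := by
    have h := Real.sqrt_le_sqrt (Real.sqrt_le_sqrt (show (1:ℝ) ≤ (k:ℝ)+1 by linarith [show (0:ℝ) ≤ (k:ℝ) from Nat.cast_nonneg k]))
    rwa [Real.sqrt_one, Real.sqrt_one] at h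
  have hkk : Real.sqrt (Real.sqrt (k : ℝ)) ≤ Real.sqrt (Real.sqrt ((k : ℝ) + 1)) :=
    Real.sqrt_le_sqrt (Real.sqrt_le_sqrt (by linarith))
  have : ((k + 1 : ℕ) : ℝ) = (k : ℝ) + 1 := by push_cast; ring
  rw [h0, this]
  linarith

/-- harmonic-type bound: `∑_{m<n} (m∨1)^{-1} ≤ 5 log n` for `n ≥ 2`. -/
lemma sum_inv_le (n : ℕ) (hn : 2 ≤ n) :
    ∑ m ∈ range n, (N m)⁻¹ ≤ 5 * Real.log n := by
  have hlog2 : (0.67:ℝ) ≤ Real.log n := by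
    have h2 : Real.log 2 ≤ Real.log n := by
      apply Real.log_le_log (by norm_num)
      exact_mod_cast hn
    have := Real.log_two_gt_d9
    linarith
  have step : ∀ m : ℕ, (N m)⁻¹ ≤ 2 * ((m : ℝ) + 1)⁻¹ := by
    intro m
    have h1 : (m : ℝ) + 1 ≤ 2 * N m := by
      have : m + 1 ≤ 2 * max m 1 := by omega
      have := (Nat.cast_le (α := ℝ)).mpr this
      push_cast at this
      unfold N; push_cast; linarith
    rw [inv_eq_one_div, show 2 * ((m:ℝ)+1)⁻¹ = 2 / ((m:ℝ)+1) from (div_eq_mul_inv 2 _).symm,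
      div_le_div_iff₀ (N_pos m) (by positivity)]
    linarith
  have hh : ∑ m ∈ range n, ((m : ℝ) + 1)⁻¹ = (harmonic n : ℝ) := by
    rw [harmonic]
    push_cast
    rfl
  calc ∑ m ∈ range n, (N m)⁻¹ ≤ ∑ m ∈ range n, 2 * ((m : ℝ) + 1)⁻¹ :=
        Finset.sum_le_sum fun m _ => step m
    _ = 2 * (harmonic n : ℝ) := by rw [← hh, Finset.mul_sum]
    _ ≤ 2 * (1 + Real.log n) := by linarith [harmonic_le_one_add_log n]
    _ ≤ 5 * Real.log n := by linarith


/-- product identity: `√√M · (√M · √√M) = M` -/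
lemma sqrt_prod_id {M : ℝ} (hM : 0 ≤ M) :
    Real.sqrt (Real.sqrt M) * (Real.sqrt M * Real.sqrt (Real.sqrt M)) = M := by
  have h1 : Real.sqrt (Real.sqrt M) * Real.sqrt (Real.sqrt M) = Real.sqrt M :=
    Real.mul_self_sqrt (Real.sqrt_nonneg M)
  have h2 : Real.sqrt M * Real.sqrt M = M := Real.mul_self_sqrt hM
  nlinarith [h1, h2]

/-- `φ(m) ≤ T (a∨1)^{-1/4} (b∨1)^{-3/4}` when `a,b ≤ m`. -/
lemma phi_le_aux (T : ℝ) (hT : 0 < T) {a b m : ℕ} (ha : a ≤ m) (hb : b ≤ m) :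
    phiOne T m ≤ T * ((Real.sqrt (Real.sqrt (N a)))⁻¹ *
      (Real.sqrt (N b) * Real.sqrt (Real.sqrt (N b)))⁻¹) := by
  have hDpos : 0 < Real.sqrt (Real.sqrt (N a)) * (Real.sqrt (N b) * Real.sqrt (Real.sqrt (N b))) :=
    mul_pos (sqrtsqrtN_pos a) (mul_pos (sqrtN_pos b) (sqrtsqrtN_pos b))
  have hDle : Real.sqrt (Real.sqrt (N a)) * (Real.sqrt (N b) * Real.sqrt (Real.sqrt (N b))) ≤ N m := by
    have h1 : Real.sqrt (Real.sqrt (N a)) ≤ Real.sqrt (Real.sqrt (N m)) :=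
      Real.sqrt_le_sqrt (Real.sqrt_le_sqrt (N_mono ha))
    have h2 : Real.sqrt (N b) * Real.sqrt (Real.sqrt (N b)) ≤
        Real.sqrt (N m) * Real.sqrt (Real.sqrt (N m)) :=
      mul_le_mul (Real.sqrt_le_sqrt (N_mono hb)) (Real.sqrt_le_sqrt (Real.sqrt_le_sqrt (N_mono hb)))
        (Real.sqrt_nonneg _) (Real.sqrt_nonneg _)
    calc Real.sqrt (Real.sqrt (N a)) * (Real.sqrt (N b) * Real.sqrt (Real.sqrt (N b)))
        ≤ Real.sqrt (Real.sqrt (N m)) * (Real.sqrt (N m) * Real.sqrt (Real.sqrt (N m))) :=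
          mul_le_mul h1 h2 (by positivity) (Real.sqrt_nonneg _)
      _ = N m := sqrt_prod_id (N_pos m).le
  calc phiOne T m = T / N m := rfl
    _ ≤ T / (Real.sqrt (Real.sqrt (N a)) * (Real.sqrt (N b) * Real.sqrt (Real.sqrt (N b)))) := by
        gcongr
    _ = T * ((Real.sqrt (Real.sqrt (N a)))⁻¹ *
        (Real.sqrt (N b) * Real.sqrt (Real.sqrt (N b)))⁻¹) := by
        rw [← mul_inv, ← div_eq_mul_inv]


lemma phi_nonneg (T : ℝ) (hT : 0 < T) (m : ℕ) : 0 ≤ phiOne T m :=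
  div_nonneg hT.le (by positivity)

/-- pointwise bound for the first part. -/
lemma P1 (T : ℝ) (hT : 0 < T) (i j k : ℕ) :
    phiOne T (max j i) * phiOne T (max k i) ≤ T ^ 2 * (f i * (g j * g k)) := by
  have h1 := phi_le_aux T hT (le_max_right j i) (le_max_left j i)
  have h2 := phi_le_aux T hT (le_max_right k i) (le_max_left k i)
  have hr1 : 0 ≤ T * ((Real.sqrt (Real.sqrt (N i)))⁻¹ *
      (Real.sqrt (N j) * Real.sqrt (Real.sqrt (N j)))⁻¹) := by positivity
  calc phiOne T (max j i) * phiOne T (max k i)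
      ≤ (T * ((Real.sqrt (Real.sqrt (N i)))⁻¹ *
          (Real.sqrt (N j) * Real.sqrt (Real.sqrt (N j)))⁻¹)) *
        (T * ((Real.sqrt (Real.sqrt (N i)))⁻¹ *
          (Real.sqrt (N k) * Real.sqrt (Real.sqrt (N k)))⁻¹)) :=
        mul_le_mul h1 h2 (phi_nonneg T hT _) hr1
    _ = T ^ 2 * (f i * (g j * g k)) := by
        rw [f, g, g]
        have : (Real.sqrt (Real.sqrt (N i)))⁻¹ * (Real.sqrt (Real.sqrt (N i)))⁻¹
            = (Real.sqrt (N i))⁻¹ := by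
          rw [← mul_inv, Real.mul_self_sqrt (Real.sqrt_nonneg _)]
        linear_combination (T ^ 2 * ((Real.sqrt (N j) * Real.sqrt (Real.sqrt (N j)))⁻¹ *
          (Real.sqrt (N k) * Real.sqrt (Real.sqrt (N k)))⁻¹)) * this

/-- pointwise bound for the second part. -/
lemma P2 (T : ℝ) (hT : 0 < T) (i j k : ℕ) :
    phiOne T j * psiOne T (i + k) j ≤ T ^ 2 * (f j * (g i * g k)) := by
  set B := N j with hB'
  set M := N (i + k) with hM'
  set mi := ((min j (i + k) : ℕ) : ℝ) with hmi'
  have hBpos := N_pos j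
  have hMpos := N_pos (i + k)
  have hmi0 : 0 ≤ mi := by positivity
  have hmB : mi ≤ B := le_trans (by exact_mod_cast Nat.cast_le.mpr (min_le_left _ _)) (cast_le_N j)
  have hmM : mi ≤ M := le_trans (by exact_mod_cast Nat.cast_le.mpr (min_le_right _ _)) (cast_le_N (i + k))
  -- min ≤ √B √M
  have hmin : mi ≤ Real.sqrt B * Real.sqrt M := by
    have : mi = Real.sqrt (mi * mi) := (Real.sqrt_mul_self hmi0).symm
    rw [this, ← Real.sqrt_mul (by positivity) M]
    exact Real.sqrt_le_sqrt (mul_le_mul hmB hmM hmi0 hBpos.le)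
  -- M √M ≥ D where D is the product of the 3/4-denominators for i and k
  set D := (Real.sqrt (N i) * Real.sqrt (Real.sqrt (N i))) *
      (Real.sqrt (N k) * Real.sqrt (Real.sqrt (N k))) with hD'
  have hDpos : 0 < D := by
    have := sqrtN_pos i; have := sqrtsqrtN_pos i
    have := sqrtN_pos k; have := sqrtsqrtN_pos k
    positivity
  have hDle : D ≤ M * Real.sqrt M := by
    set x := Real.sqrt (N i) * Real.sqrt (N k) with hx'
    have hx0 : 0 ≤ x := by positivity
    have hxM : x ≤ M := by
      have h1 : x = Real.sqrt (N i * N k) := (Real.sqrt_mul (N_pos i).le _).symm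
      have h2 : N i * N k ≤ M * M :=
        mul_le_mul (N_mono (Nat.le_add_right i k)) (N_mono (Nat.le_add_left k i))
          (N_pos k).le hMpos.le
      rw [h1]
      calc Real.sqrt (N i * N k) ≤ Real.sqrt (M * M) := Real.sqrt_le_sqrt h2
        _ = M := Real.sqrt_mul_self hMpos.le
    have hDx : D = x * Real.sqrt x := by
      rw [hD', hx', Real.sqrt_mul (Real.sqrt_nonneg (N i))]
      ring
    rw [hDx]
    exact mul_le_mul hxM (Real.sqrt_le_sqrt hxM) (Real.sqrt_nonneg _) hMpos.le
  -- LHS = T² mi / (B M²)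
  have hLHS : phiOne T j * psiOne T (i + k) j = T ^ 2 * mi / (B * M ^ 2) := by
    rw [phiOne, psiOne]
    rw [show ((min j (i + k) : ℕ) : ℝ) = mi from rfl]
    rw [show ((max j 1 : ℕ) : ℝ) = B from rfl, show ((max (i+k) 1 : ℕ) : ℝ) = M from rfl]
    ring
  -- RHS = T² / (√B * D)
  have hRHS : T ^ 2 * (f j * (g i * g k)) = T ^ 2 / (Real.sqrt B * D) := by
    rw [f, g, g, hD', hB']
    rw [div_eq_mul_inv, mul_inv, mul_inv]
    ring
  rw [hLHS, hRHS]
  rw [div_le_div_iff₀ (by positivity) (by positivity)]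
  -- T² mi (√B D) ≤ T² (B M²)
  have hBB : Real.sqrt B * Real.sqrt B = B := Real.mul_self_sqrt hBpos.le
  have hMM : Real.sqrt M * Real.sqrt M = M := Real.mul_self_sqrt hMpos.le
  have key : mi * (Real.sqrt B * D) ≤ B * M ^ 2 := by
    calc mi * (Real.sqrt B * D)
        ≤ (Real.sqrt B * Real.sqrt M) * (Real.sqrt B * (M * Real.sqrt M)) := by
          apply mul_le_mul hmin (mul_le_mul_of_nonneg_left hDle (Real.sqrt_nonneg B))
            (by positivity) (by positivity)
      _ = (Real.sqrt B * Real.sqrt B) * ((Real.sqrt M * Real.sqrt M) * M) := by ring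
      _ = B * M ^ 2 := by rw [hBB, hMM]; ring
  nlinarith [key, sq_nonneg T, mul_nonneg hmi0 (by positivity : (0:ℝ) ≤ Real.sqrt B * D)]

end Stmt13Aux

open Stmt13Aux in
/-- The `r = 1` case: the master bound with `φ(m) = T/m`, `ψ(m,k) = T min(k,m)/m²` is
`O(n² (log n)^{2α−4})`. -/
theorem stmt_13 (α : ℕ) (hα : 2 ≤ α) (T : ℝ) (hT : 0 < T) :
    ∃ C : ℝ, 0 < C ∧ ∀ n : ℕ, 2 ≤ n →
      (n : ℝ) * (∑ i ∈ Finset.range n, phiOne T i) ^ (2 * α - 4) *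
        ∑ i ∈ Finset.range n, ∑ j ∈ Finset.range n, ∑ k ∈ Finset.range n,
          (phiOne T (max j i) * phiOne T (max k i) + phiOne T j * psiOne T (i + k) j)
      ≤ C * T ^ (2 * α - 2) * (n : ℝ) ^ 2 * Real.log n ^ (2 * α - 4) := by
  refine ⟨150 * 5 ^ (2 * α - 4), by positivity, fun n hn => ?_⟩
  have hn1 : 1 ≤ n := le_trans (by norm_num) hn
  have hn0 : (0:ℝ) ≤ n := Nat.cast_nonneg n
  have hn1' : (1:ℝ) ≤ n := by exact_mod_cast hn1
  set F := ∑ m ∈ range n, f m with hF'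
  set G := ∑ m ∈ range n, g m with hG'
  have hF0 : 0 ≤ F := Finset.sum_nonneg fun m _ => f_nonneg m
  have hG0 : 0 ≤ G := Finset.sum_nonneg fun m _ => g_nonneg m
  have hF : F ≤ 3 * Real.sqrt n := sum_f_le n hn1
  have hG : G ≤ 5 * Real.sqrt (Real.sqrt n) := sum_g_le n hn1
  -- triple sum bound
  have htriple : (∑ i ∈ range n, ∑ j ∈ range n, ∑ k ∈ range n,
      (phiOne T (max j i) * phiOne T (max k i) + phiOne T j * psiOne T (i + k) j))
      ≤ 150 * T ^ 2 * n := by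
    have step : ∑ i ∈ range n, ∑ j ∈ range n, ∑ k ∈ range n,
        (phiOne T (max j i) * phiOne T (max k i) + phiOne T j * psiOne T (i + k) j)
        ≤ ∑ i ∈ range n, ∑ j ∈ range n, ∑ k ∈ range n,
          (T^2 * (f i * (g j * g k)) + T^2 * (f j * (g i * g k))) := by
      refine Finset.sum_le_sum fun i _ => Finset.sum_le_sum fun j _ =>
        Finset.sum_le_sum fun k _ => ?_
      exact add_le_add (P1 T hT i j k) (P2 T hT i j k)
    have heval : ∑ i ∈ range n, ∑ j ∈ range n, ∑ k ∈ range n,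
        (T^2 * (f i * (g j * g k)) + T^2 * (f j * (g i * g k)))
        = 2 * T^2 * (F * (G * G)) := by
      simp only [Finset.sum_add_distrib, ← Finset.mul_sum, ← Finset.sum_mul]
      ring
    have hs1 : Real.sqrt (Real.sqrt n) * Real.sqrt (Real.sqrt n) = Real.sqrt n :=
      Real.mul_self_sqrt (Real.sqrt_nonneg _)
    have hs2 : Real.sqrt n * Real.sqrt n = (n:ℝ) := Real.mul_self_sqrt hn0
    have hmid : F * (G * G) ≤ (3 * Real.sqrt n) * ((5 * Real.sqrt (Real.sqrt n)) *
        (5 * Real.sqrt (Real.sqrt n))) := by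
      refine mul_le_mul hF (mul_le_mul hG hG hG0 (by positivity)) (by positivity) (by positivity)
    have hfin : (3 * Real.sqrt n) * ((5 * Real.sqrt (Real.sqrt n)) *
        (5 * Real.sqrt (Real.sqrt n))) = 75 * n := by
      have h : Real.sqrt n * (Real.sqrt (Real.sqrt n) * Real.sqrt (Real.sqrt n)) = (n:ℝ) := by
        rw [hs1, hs2]
      linear_combination 75 * h
    calc ∑ i ∈ range n, ∑ j ∈ range n, ∑ k ∈ range n,
        (phiOne T (max j i) * phiOne T (max k i) + phiOne T j * psiOne T (i + k) j)
        ≤ 2 * T^2 * (F * (G * G)) := by rw [← heval]; exact step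
      _ ≤ 2 * T^2 * (75 * n) := by
          rw [← hfin]
          exact mul_le_mul_of_nonneg_left hmid (by positivity)
      _ = 150 * T ^ 2 * n := by ring
  -- bound on the φ-sum
  set S := ∑ i ∈ range n, phiOne T i with hS'
  have hS0 : 0 ≤ S := Finset.sum_nonneg fun i _ => phi_nonneg T hT i
  have hSle : S ≤ 5 * T * Real.log n := by
    have hrw : S = T * ∑ m ∈ range n, (N m)⁻¹ := by
      rw [Finset.mul_sum]
      exact Finset.sum_congr rfl fun m _ => by rw [phiOne, N, div_eq_mul_inv]
    rw [hrw]
    calc T * ∑ m ∈ range n, (N m)⁻¹ ≤ T * (5 * Real.log n) :=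
          mul_le_mul_of_nonneg_left (sum_inv_le n hn) hT.le
      _ = 5 * T * Real.log n := by ring
  have hlog0 : 0 ≤ Real.log n := Real.log_nonneg hn1'
  have hpow : S ^ (2 * α - 4) ≤ (5 * T * Real.log n) ^ (2 * α - 4) :=
    pow_le_pow_left₀ hS0 hSle _
  have h1 : (n : ℝ) * S ^ (2 * α - 4) *
      (∑ i ∈ range n, ∑ j ∈ range n, ∑ k ∈ range n,
        (phiOne T (max j i) * phiOne T (max k i) + phiOne T j * psiOne T (i + k) j))
      ≤ (n : ℝ) * S ^ (2 * α - 4) * (150 * T ^ 2 * n) := by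
    refine mul_le_mul_of_nonneg_left htriple ?_
    positivity
  have h2 : (n : ℝ) * S ^ (2 * α - 4) * (150 * T ^ 2 * n)
      ≤ (n : ℝ) * (5 * T * Real.log n) ^ (2 * α - 4) * (150 * T ^ 2 * n) := by
    refine mul_le_mul_of_nonneg_right (mul_le_mul_of_nonneg_left hpow hn0) ?_
    positivity
  have heq : (n : ℝ) * (5 * T * Real.log n) ^ (2 * α - 4) * (150 * T ^ 2 * n)
      = 150 * 5 ^ (2 * α - 4) * T ^ (2 * α - 2) * (n : ℝ) ^ 2 *
        Real.log n ^ (2 * α - 4) := by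
    have hT2 : T ^ (2 * α - 4) * T ^ 2 = T ^ (2 * α - 2) := by
      rw [← pow_add]
      congr 1
      omega
    rw [show (5 * T * Real.log n) ^ (2 * α - 4)
        = 5 ^ (2 * α - 4) * T ^ (2 * α - 4) * Real.log n ^ (2 * α - 4) by
      rw [mul_pow, mul_pow]]
    rw [← hT2]
    ring
  calc (n : ℝ) * S ^ (2 * α - 4) *
      (∑ i ∈ range n, ∑ j ∈ range n, ∑ k ∈ range n,
        (phiOne T (max j i) * phiOne T (max k i) + phiOne T j * psiOne T (i + k) j))
      ≤ (n : ℝ) * (5 * T * Real.log n) ^ (2 * α - 4) * (150 * T ^ 2 * n) :=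
        le_trans h1 h2
    _ = 150 * 5 ^ (2 * α - 4) * T ^ (2 * α - 2) * (n : ℝ) ^ 2 *
        Real.log n ^ (2 * α - 4) := heq
end

section
/- The double integral ∫_0^∞ ∫_0^∞ dr ds / [(1+r)(1+s)·√((1+r+s)² − 4rs)] converges and is strictly greater than π²/6. -/
/-! Since `(1 + r + s)² - 4rs < (1 + r + s)²`, the integrand strictly dominates
`1 / ((1 + r)(1 + s)(1 + r + s))`, whose integral over the quadrant is `π² / 6`: integrating in `s`
leaves `∫₀^∞ log (1 + r) / (r (1 + r)) dr`, which the substitution `r = x / (1 - x)` turns into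
`∫₀¹ -log (1 - x) / x dx = ∑ 1 / (n + 1)²`.
Convergence comes from `(1 + r + s)² - 4rs ≥ 2(r + s) ≥ 4√(rs)`, which bounds the integrand by the
product `½ · r^(-1/4) / (1 + r) · s^(-1/4) / (1 + s)` of two integrable functions. -/

open MeasureTheory Real Set Filter Topology

lemma integrableOn_Ioi_rpow_div_one_add {a : ℝ} (ha : -1 < a) (ha' : a < 0) :
    IntegrableOn (fun t : ℝ => t ^ a / (1 + t)) (Ioi 0) := by
  have hmeas : AEStronglyMeasurable (fun t : ℝ => t ^ a / (1 + t)) volume :=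
    (by fun_prop : Measurable fun t : ℝ => t ^ a / (1 + t)).aestronglyMeasurable
  rw [← Ioc_union_Ioi_eq_Ioi zero_le_one]
  refine IntegrableOn.union ?_ ?_
  · have hpow : IntegrableOn (fun t : ℝ => t ^ a) (Ioc 0 1) :=
      (intervalIntegrable_iff_integrableOn_Ioc_of_le zero_le_one).mp
        (intervalIntegral.intervalIntegrable_rpow' ha)
    refine hpow.mono' hmeas.restrict ?_
    filter_upwards [ae_restrict_mem measurableSet_Ioc] with t ⟨(ht : 0 < t), _⟩
    rw [norm_of_nonneg (by positivity)]
    exact div_le_self (by positivity) (by linarith)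
  · have hpow : IntegrableOn (fun t : ℝ => t ^ (a - 1)) (Ioi 1) :=
      integrableOn_Ioi_rpow_of_lt (by linarith) one_pos
    refine hpow.mono' hmeas.restrict ?_
    filter_upwards [ae_restrict_mem measurableSet_Ioi] with t (ht : 1 < t)
    rw [norm_of_nonneg (by positivity), rpow_sub_one (by positivity)]
    gcongr
    linarith

lemma discr_pos {r s : ℝ} (hs : 0 < s) : 0 < (1 + r + s) ^ 2 - 4 * r * s := by
  nlinarith [sq_nonneg (1 + r - s)]

lemma sqrt_discr_lt {r s : ℝ} (hr : 0 < r) (hs : 0 < s) :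
    √((1 + r + s) ^ 2 - 4 * r * s) < 1 + r + s := by
  rw [sqrt_lt' (by positivity)]
  nlinarith [mul_pos hr hs]

lemma two_mul_rpow_mul_rpow_le_sqrt_discr {r s : ℝ} (hr : 0 ≤ r) (hs : 0 ≤ s) :
    2 * (r ^ (4⁻¹ : ℝ) * s ^ (4⁻¹ : ℝ)) ≤ √((1 + r + s) ^ 2 - 4 * r * s) := by
  have hpow {t : ℝ} (ht : 0 ≤ t) : (t ^ (4⁻¹ : ℝ)) ^ 4 = t := by
    simpa using rpow_inv_natCast_pow ht (n := 4) (by norm_num)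
  apply le_sqrt_of_sq_le
  have hr4 := hpow hr
  have hs4 := hpow hs
  set a := r ^ (4⁻¹ : ℝ)
  set b := s ^ (4⁻¹ : ℝ)
  clear_value a b
  subst hr4 hs4
  nlinarith [sq_nonneg (a ^ 4 - b ^ 4), sq_nonneg (a ^ 2 - b ^ 2), sq_nonneg a, sq_nonneg b]

lemma minorant_lt_integrand {r s : ℝ} (hr : 0 < r) (hs : 0 < s) :
    ((1 + r) * (1 + s) * (1 + r + s))⁻¹ <
      1 / ((1 + r) * (1 + s) * √((1 + r + s) ^ 2 - 4 * r * s)) := by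
  have := sqrt_pos.mpr (discr_pos (r := r) hs)
  rw [one_div]
  gcongr
  exact sqrt_discr_lt hr hs

lemma integrand_le_half_mul_rpow {r s : ℝ} (hr : 0 < r) (hs : 0 < s) :
    1 / ((1 + r) * (1 + s) * √((1 + r + s) ^ 2 - 4 * r * s)) ≤
      2⁻¹ * (r ^ (-4⁻¹ : ℝ) / (1 + r) * (s ^ (-4⁻¹ : ℝ) / (1 + s))) := by
  calc 1 / ((1 + r) * (1 + s) * √((1 + r + s) ^ 2 - 4 * r * s))
      ≤ 1 / ((1 + r) * (1 + s) * (2 * (r ^ (4⁻¹ : ℝ) * s ^ (4⁻¹ : ℝ)))) := by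
        gcongr
        exact two_mul_rpow_mul_rpow_le_sqrt_discr hr.le hs.le
    _ = _ := by
        rw [rpow_neg hr.le, rpow_neg hs.le]
        field_simp

lemma integrableOn_integrand :
    IntegrableOn
      (fun p : ℝ × ℝ =>
        1 / ((1 + p.1) * (1 + p.2) * √((1 + p.1 + p.2) ^ 2 - 4 * p.1 * p.2)))
      (Ioi 0 ×ˢ Ioi 0) := by
  have h := integrableOn_Ioi_rpow_div_one_add (a := -4⁻¹) (by norm_num) (by norm_num)
  have hmaj : IntegrableOn (fun p : ℝ × ℝ =>
      2⁻¹ * (p.1 ^ (-4⁻¹ : ℝ) / (1 + p.1) * (p.2 ^ (-4⁻¹ : ℝ) / (1 + p.2))))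
      (Ioi 0 ×ˢ Ioi 0) := by
    rw [IntegrableOn, Measure.volume_eq_prod, ← Measure.prod_restrict]
    exact (h.mul_prod h).const_mul _
  refine hmaj.mono' (by fun_prop : Measurable _).aestronglyMeasurable ?_
  filter_upwards [ae_restrict_mem (measurableSet_Ioi.prod measurableSet_Ioi)]
    with p ⟨(hr : 0 < p.1), (hs : 0 < p.2)⟩
  rw [norm_of_nonneg (by positivity)]
  exact integrand_le_half_mul_rpow hr hs

lemma integral_Ioi_inv_add_mul_inv_add {a c : ℝ} (ha : 0 < a) (hc : 0 < c) :
    ∫ s in Ioi 0, ((a + s) * (a + c + s))⁻¹ = (log (a + c) - log a) / c := by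
  have hderiv : ∀ s ∈ Ici (0 : ℝ), HasDerivAt (fun s => (log (a + s) - log (a + c + s)) / c)
      ((a + s) * (a + c + s))⁻¹ s := by
    intro s (hs : 0 ≤ s)
    have h₁ := ((hasDerivAt_id s).const_add a).log (by positivity)
    have h₂ := ((hasDerivAt_id s).const_add (a + c)).log (by positivity)
    refine ((h₁.sub h₂).div_const c).congr_deriv ?_
    simp only [id]
    field_simp
    ring
  have hlim : Tendsto (fun s => (log (a + s) - log (a + c + s)) / c) atTop (𝓝 0) := by
    have := ((tendsto_log_comp_add_sub_log a).sub
      (tendsto_log_comp_add_sub_log (a + c))).div_const c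
    rw [sub_zero, zero_div] at this
    refine this.congr fun s => ?_
    rw [add_comm s, add_comm s, sub_sub_sub_cancel_right]
  rw [integral_Ioi_of_hasDerivAt_of_nonneg' hderiv
    (fun s (hs : 0 < s) => by positivity) hlim]
  simp only [add_zero]
  ring

lemma integral_Ioo_pow_div (n : ℕ) :
    ∫ x in Ioo (0 : ℝ) 1, x ^ n / (n + 1) = 1 / ((n : ℝ) + 1) ^ 2 := by
  rw [integral_div, ← integral_Ioc_eq_integral_Ioo, ← intervalIntegral.integral_of_le zero_le_one,
    integral_pow]
  field_simp
  simp

lemma hasSum_one_div_add_one_sq : HasSum (fun n : ℕ => 1 / ((n : ℝ) + 1) ^ 2) (π ^ 2 / 6) := by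
  simpa using (hasSum_nat_add_iff' 1).mpr hasSum_zeta_two

lemma integral_Ioo_neg_log_one_sub_div :
    ∫ x in Ioo (0 : ℝ) 1, -log (1 - x) / x = π ^ 2 / 6 := by
  have hint (n : ℕ) : IntegrableOn (fun x : ℝ => x ^ n / (n + 1)) (Ioo 0 1) :=
    (continuous_pow n |>.div_const _).integrableOn_Icc.mono_set Ioo_subset_Icc_self
  have hnorm (n : ℕ) : ∫ x in Ioo (0 : ℝ) 1, ‖x ^ n / (n + 1)‖ = 1 / ((n : ℝ) + 1) ^ 2 := by
    rw [← integral_Ioo_pow_div]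
    refine setIntegral_congr_fun measurableSet_Ioo fun x hx => norm_of_nonneg ?_
    have := hx.1
    positivity
  have hseries : HasSum (fun n : ℕ => 1 / ((n : ℝ) + 1) ^ 2)
      (∫ x in Ioo (0 : ℝ) 1, ∑' n : ℕ, x ^ n / (n + 1)) := by
    simpa only [integral_Ioo_pow_div] using hasSum_integral_of_summable_integral_norm hint
      (by simpa only [hnorm] using hasSum_one_div_add_one_sq.summable)
  rw [hasSum_one_div_add_one_sq.unique hseries]
  refine setIntegral_congr_fun measurableSet_Ioo fun x ⟨hx₀, hx₁⟩ => ?_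
  have hlog := (hasSum_pow_div_log_of_abs_lt_one (x := x) (by rwa [abs_of_pos hx₀])).div_const x
  refine (hlog.congr_fun fun n => ?_).tsum_eq.symm
  rw [pow_succ]
  field_simp

lemma integral_Ioi_log_one_add_div_mul_one_add :
    ∫ r in Ioi 0, log (1 + r) / (r * (1 + r)) = π ^ 2 / 6 := by
  have hbij : BijOn (fun x : ℝ => x / (1 - x)) (Ioo 0 1) (Ioi 0) := by
    refine InvOn.bijOn (f' := fun y => y / (1 + y))
      ⟨fun x ⟨_, hx₁⟩ => ?_, fun y (hy : 0 < y) => ?_⟩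
      (fun x ⟨hx₀, hx₁⟩ => div_pos hx₀ (sub_pos.mpr hx₁))
      (fun y (hy : 0 < y) => ⟨by positivity, (div_lt_one (by positivity)).mpr (by linarith)⟩)
    · have : 1 - x ≠ 0 := by linarith
      field_simp
      ring
    · field_simp
      ring
  have hderiv : ∀ x ∈ Ioo (0 : ℝ) 1,
      HasDerivWithinAt (fun x => x / (1 - x)) ((1 - x) ^ 2)⁻¹ (Ioo 0 1) x := by
    intro x ⟨_, hx₁⟩
    have hdiv := (hasDerivAt_id x).div ((hasDerivAt_id x).const_sub 1) (sub_pos.mpr hx₁).ne'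
    refine (hdiv.congr_deriv ?_).hasDerivWithinAt
    simp only [id]
    field_simp
    ring
  rw [← hbij.image_eq,
    integral_image_eq_integral_abs_deriv_smul measurableSet_Ioo hderiv hbij.injOn,
    ← integral_Ioo_neg_log_one_sub_div]
  refine setIntegral_congr_fun measurableSet_Ioo fun x ⟨hx₀, hx₁⟩ => ?_
  have h₁ : 0 < 1 - x := by linarith
  have hinv : 1 + x / (1 - x) = (1 - x)⁻¹ := by
    field_simp
    ring
  rw [hinv, log_inv, abs_of_pos (by positivity), smul_eq_mul]
  field_simp

lemma integrableOn_minorant :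
    IntegrableOn (fun p : ℝ × ℝ => ((1 + p.1) * (1 + p.2) * (1 + p.1 + p.2))⁻¹)
      (Ioi 0 ×ˢ Ioi 0) := by
  refine integrableOn_integrand.mono' (by fun_prop : Measurable _).aestronglyMeasurable ?_
  filter_upwards [ae_restrict_mem (measurableSet_Ioi.prod measurableSet_Ioi)]
    with p ⟨(hr : 0 < p.1), (hs : 0 < p.2)⟩
  rw [norm_of_nonneg (by positivity)]
  exact (minorant_lt_integrand hr hs).le

lemma integral_minorant :
    ∫ p in Ioi (0 : ℝ) ×ˢ Ioi (0 : ℝ), ((1 + p.1) * (1 + p.2) * (1 + p.1 + p.2))⁻¹ =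
      π ^ 2 / 6 := by
  have h := integrableOn_minorant
  rw [IntegrableOn, Measure.volume_eq_prod] at h
  rw [Measure.volume_eq_prod, setIntegral_prod _ h, ← integral_Ioi_log_one_add_div_mul_one_add]
  refine setIntegral_congr_fun measurableSet_Ioi fun r (hr : 0 < r) => ?_
  simp_rw [mul_assoc, mul_inv (1 + r)]
  rw [integral_const_mul, integral_Ioi_inv_add_mul_inv_add one_pos hr, log_one, sub_zero]
  field_simp

lemma setIntegral_lt_setIntegral_of_forall_lt {X : Type*} [MeasurableSpace X] {μ : Measure X}
    {s : Set X} {f g : X → ℝ} (hs : MeasurableSet s) (hμ : μ s ≠ 0)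
    (hf : IntegrableOn f s μ) (hg : IntegrableOn g s μ) (hlt : ∀ x ∈ s, f x < g x) :
    ∫ x in s, f x ∂μ < ∫ x in s, g x ∂μ := by
  rw [← sub_pos, ← integral_sub hg hf]
  refine (setIntegral_pos_iff_support_of_nonneg_ae ?_ (hg.sub hf)).mpr ?_
  · filter_upwards [ae_restrict_mem hs] with x hx
    exact sub_nonneg.mpr (hlt x hx).le
  · have hsupp : Function.support (g - f) ∩ s = s :=
      inter_eq_right.mpr fun x hx => sub_ne_zero.mpr (hlt x hx).ne'
    rwa [hsupp, pos_iff_ne_zero]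

/-- The double integral `∫_0^∞∫_0^∞ dr ds/[(1+r)(1+s)√((1+r+s)²−4rs)]` converges and is
strictly greater than `π²/6`. -/
theorem stmt_14 :
    IntegrableOn
      (fun p : ℝ × ℝ =>
        1 / ((1 + p.1) * (1 + p.2) * Real.sqrt ((1 + p.1 + p.2) ^ 2 - 4 * p.1 * p.2)))
      (Set.Ioi 0 ×ˢ Set.Ioi 0) volume
    ∧ π ^ 2 / 6 <
      ∫ p in Set.Ioi (0 : ℝ) ×ˢ Set.Ioi (0 : ℝ),
        1 / ((1 + p.1) * (1 + p.2) * Real.sqrt ((1 + p.1 + p.2) ^ 2 - 4 * p.1 * p.2)) := by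
  refine ⟨integrableOn_integrand, ?_⟩
  rw [← integral_minorant]
  refine setIntegral_lt_setIntegral_of_forall_lt (measurableSet_Ioi.prod measurableSet_Ioi) ?_
    integrableOn_minorant integrableOn_integrand fun p ⟨hr, hs⟩ => minorant_lt_integrand hr hs
  simp [Measure.volume_eq_prod, Measure.prod_prod]
end

section
/- With K = ε/√(1−λ) and ε > 0 fixed, as λ ↑ 1 one has ∫_0^K ∫_0^K r⁴ s² dr ds / [(1+r²)²(1+s)²(1+r²+s²)] ∼ (π/2)·log K ∼ (π/4)·log(1/(1−λ)). -/
open Filter Real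

/-- The double integral appearing in the computation of `κ₁`. -/
noncomputable def I17 (K : ℝ) : ℝ :=
  ∫ r in (0 : ℝ)..K, ∫ s in (0 : ℝ)..K,
    r ^ 4 * s ^ 2 / ((1 + r ^ 2) ^ 2 * (1 + s) ^ 2 * (1 + r ^ 2 + s ^ 2))

/-!
The integrand is `w(r) g(s) k(r,s)` with `k(r,s) = 1/(1+r²+s²)`, `w = r⁴/(1+r²)²` and
`g = s²/(1+s)²`. Both weights lie in `[0,1]`, with `1 - w ≤ 2/(1+r²)` and `1 - g ≤ 2/√(1+s²)`,
so `I(K)` differs from `∫∫ k` by at most the integrals of these defects against `k`. Since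
`∫₀^K k(r,s) ds = arctan(K/√(1+r²))/√(1+r²) ≤ π/(2√(1+r²))`, each defect integral (the one in `s`
after exchanging the order of integration) is at most `π ∫ 1/(1+x²) ≤ π²/2`, while
`∫∫ k = (π/2) arsinh K + O(1) = (π/2) log K + O(1)`. With `K = ε/√(1-λ)` one has
`log K = log ε + ½ log(1/(1-λ))`.
-/

open Set Function intervalIntegral MeasureTheory Asymptotics

theorem continuous_intervalIntegral_of_continuousOn {E : Type*} [NormedAddCommGroup E]
    [NormedSpace ℝ E] {F : ℝ → ℝ → E} {a b : ℝ}
    (hF : ContinuousOn (uncurry F) (univ ×ˢ uIcc a b)) :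
    Continuous fun x => ∫ y in a..b, F x y := by
  let G : ℝ → ℝ → E := fun x y => F x (projIcc (min a b) (max a b) min_le_max y)
  have hFG : (fun x => ∫ y in a..b, F x y) = fun x => ∫ y in a..b, G x y :=
    funext fun x => integral_congr fun y hy => by simp only [G, projIcc_of_mem _ hy]
  rw [hFG]
  refine continuous_parametric_intervalIntegral_of_continuous' ?_ a b
  exact hF.comp_continuous
    (f := fun p : ℝ × ℝ => (p.1, (projIcc (min a b) (max a b) min_le_max p.2 : ℝ)))
    (by fun_prop) fun p => ⟨mem_univ _, Subtype.mem _⟩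

theorem intervalIntegral_intervalIntegral_mono_on {F G : ℝ → ℝ → ℝ} {a b c d : ℝ}
    (hab : a ≤ b) (hcd : c ≤ d)
    (hF : ContinuousOn (uncurry F) (univ ×ˢ Icc c d))
    (hG : ContinuousOn (uncurry G) (univ ×ˢ Icc c d))
    (hFG : ∀ x ∈ Icc a b, ∀ y ∈ Icc c d, F x y ≤ G x y) :
    ∫ x in a..b, ∫ y in c..d, F x y ≤ ∫ x in a..b, ∫ y in c..d, G x y := by
  rw [← uIcc_of_le hcd] at hF hG
  have slice {H : ℝ → ℝ → ℝ} (hH : ContinuousOn (uncurry H) (univ ×ˢ uIcc c d)) (x : ℝ) :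
      IntervalIntegrable (H x) volume c d :=
    (hH.comp (Continuous.prodMk_right x).continuousOn fun _ hy =>
      ⟨mem_univ _, hy⟩).intervalIntegrable
  refine integral_mono_on hab ?_ ?_ fun x hx =>
    integral_mono_on hcd (slice hF x) (slice hG x) (hFG x hx)
  · exact (continuous_intervalIntegral_of_continuousOn hF).intervalIntegrable a b
  · exact (continuous_intervalIntegral_of_continuousOn hG).intervalIntegrable a b

theorem intervalIntegral_intervalIntegral_sub {F G : ℝ → ℝ → ℝ} (hF : Continuous (uncurry F))
    (hG : Continuous (uncurry G)) (a b c d : ℝ) :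
    ∫ x in a..b, ∫ y in c..d, (F x y - G x y) =
      (∫ x in a..b, ∫ y in c..d, F x y) - ∫ x in a..b, ∫ y in c..d, G x y := by
  have slice {H : ℝ → ℝ → ℝ} (hH : Continuous (uncurry H)) (x : ℝ) :
      IntervalIntegrable (H x) volume c d :=
    (hH.comp (Continuous.prodMk_right x)).intervalIntegrable c d
  simp_rw [integral_sub (slice hF _) (slice hG _)]
  exact integral_sub
    ((continuous_parametric_intervalIntegral_of_continuous' hF c d).intervalIntegrable a b)
    ((continuous_parametric_intervalIntegral_of_continuous' hG c d).intervalIntegrable a b)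

theorem integral_inv_add_sq {c : ℝ} (hc : 0 < c) (K : ℝ) :
    ∫ s in (0 : ℝ)..K, (c + s ^ 2)⁻¹ = arctan (K / √c) / √c := by
  have hsc : 0 < √c := sqrt_pos.2 hc
  have hscale (s : ℝ) : (c + s ^ 2)⁻¹ = c⁻¹ * (1 + (s / √c) ^ 2)⁻¹ := by
    rw [div_pow, sq_sqrt hc.le]
    field_simp
  simp_rw [hscale, intervalIntegral.integral_const_mul,
    integral_comp_div (fun x => (1 + x ^ 2)⁻¹) hsc.ne', integral_inv_one_add_sq, zero_div,
    arctan_zero, sub_zero, smul_eq_mul]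
  field_simp
  rw [sq_sqrt hc.le]

theorem continuous_inv_sqrt_one_add_sq : Continuous fun r : ℝ => (√(1 + r ^ 2))⁻¹ :=
  by fun_prop (disch := exact fun r => (sqrt_pos.2 (by positivity)).ne')

theorem integral_inv_sqrt_one_add_sq (K : ℝ) :
    ∫ r in (0 : ℝ)..K, (√(1 + r ^ 2))⁻¹ = arsinh K := by
  rw [integral_eq_sub_of_hasDerivAt (fun x _ => hasDerivAt_arsinh x)
    (continuous_inv_sqrt_one_add_sq.intervalIntegrable 0 K), arsinh_zero, sub_zero]

theorem arctan_le_self {x : ℝ} (hx : 0 ≤ x) : arctan x ≤ x :=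
  calc arctan x ≤ tan (arctan x) := le_tan (arctan_nonneg.2 hx) (arctan_lt_pi_div_two x)
    _ = x := tan_arctan x

theorem pi_div_two_sub_inv_le_arctan {x : ℝ} (hx : 0 < x) : π / 2 - x⁻¹ ≤ arctan x := by
  linarith [arctan_inv_of_pos hx, arctan_le_self (inv_nonneg.2 hx.le)]

noncomputable def kernel (r s : ℝ) : ℝ := (1 + r ^ 2 + s ^ 2)⁻¹

theorem kernel_nonneg (r s : ℝ) : 0 ≤ kernel r s := by unfold kernel; positivity

theorem kernel_comm (r s : ℝ) : kernel r s = kernel s r := by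
  rw [kernel, kernel, add_right_comm]

theorem continuous_kernel : Continuous (uncurry kernel) := by
  unfold kernel
  fun_prop (disch := exact fun p => by positivity)

theorem integral_kernel_eq (r K : ℝ) :
    ∫ s in (0 : ℝ)..K, kernel r s = arctan (K / √(1 + r ^ 2)) / √(1 + r ^ 2) :=
  integral_inv_add_sq (by positivity) K

theorem integral_kernel_le (r K : ℝ) :
    ∫ s in (0 : ℝ)..K, kernel r s ≤ π / 2 * (√(1 + r ^ 2))⁻¹ := by
  rw [integral_kernel_eq, div_eq_mul_inv]
  gcongr
  exact (arctan_lt_pi_div_two _).le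

theorem integral_kernel_ge (r : ℝ) {K : ℝ} (hK : 0 < K) :
    π / 2 * (√(1 + r ^ 2))⁻¹ - K⁻¹ ≤ ∫ s in (0 : ℝ)..K, kernel r s := by
  have hu : 0 < √(1 + r ^ 2) := sqrt_pos.2 (by positivity)
  have h := pi_div_two_sub_inv_le_arctan (div_pos hK hu)
  rw [integral_kernel_eq]
  calc π / 2 * (√(1 + r ^ 2))⁻¹ - K⁻¹
        = (π / 2 - (K / √(1 + r ^ 2))⁻¹) * (√(1 + r ^ 2))⁻¹ := by field_simp
    _ ≤ _ := mul_le_mul_of_nonneg_right h (inv_nonneg.2 hu.le)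

theorem continuous_integral_kernel (K : ℝ) :
    Continuous fun r => ∫ s in (0 : ℝ)..K, kernel r s :=
  continuous_parametric_intervalIntegral_of_continuous' continuous_kernel 0 K

theorem integral_integral_kernel_le {K : ℝ} (hK : 0 ≤ K) :
    ∫ r in (0 : ℝ)..K, ∫ s in (0 : ℝ)..K, kernel r s ≤ π / 2 * arsinh K := by
  rw [← integral_inv_sqrt_one_add_sq, ← intervalIntegral.integral_const_mul]
  exact integral_mono_on hK ((continuous_integral_kernel K).intervalIntegrable 0 K)
    ((continuous_inv_sqrt_one_add_sq.const_mul _).intervalIntegrable 0 K)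
    fun r _ => integral_kernel_le r K

theorem integral_integral_kernel_ge {K : ℝ} (hK : 0 < K) :
    π / 2 * arsinh K - 1 ≤ ∫ r in (0 : ℝ)..K, ∫ s in (0 : ℝ)..K, kernel r s := by
  have hlower : ∫ r in (0 : ℝ)..K, (π / 2 * (√(1 + r ^ 2))⁻¹ - K⁻¹) = π / 2 * arsinh K - 1 := by
    rw [intervalIntegral.integral_sub
      ((continuous_inv_sqrt_one_add_sq.const_mul _).intervalIntegrable 0 K)
      intervalIntegrable_const, intervalIntegral.integral_const_mul, integral_inv_sqrt_one_add_sq,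
      intervalIntegral.integral_const, sub_zero, smul_eq_mul, mul_inv_cancel₀ hK.ne']
  rw [← hlower]
  exact integral_mono_on hK.le
    (((continuous_inv_sqrt_one_add_sq.const_mul _).sub continuous_const).intervalIntegrable 0 K)
    ((continuous_integral_kernel K).intervalIntegrable 0 K) fun r _ => integral_kernel_ge r hK

theorem integral_integral_mul_kernel_le {h : ℝ → ℝ} {C K : ℝ} (hh : Continuous h)
    (h0 : ∀ r, 0 ≤ h r) (hC : ∀ r, h r ≤ C * (√(1 + r ^ 2))⁻¹) (hK : 0 ≤ K) :
    ∫ r in (0 : ℝ)..K, ∫ s in (0 : ℝ)..K, h r * kernel r s ≤ C * (π / 2) ^ 2 := by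
  have hC0 : 0 ≤ C := by simpa using (h0 0).trans (hC 0)
  have hpt (r : ℝ) : h r * ∫ s in (0 : ℝ)..K, kernel r s ≤ C * (π / 2) * (1 + r ^ 2)⁻¹ :=
    calc h r * ∫ s in (0 : ℝ)..K, kernel r s
        ≤ C * (√(1 + r ^ 2))⁻¹ * (π / 2 * (√(1 + r ^ 2))⁻¹) :=
          mul_le_mul (hC r) (integral_kernel_le r K)
            (intervalIntegral.integral_nonneg hK fun s _ => kernel_nonneg r s) (by positivity)
      _ = C * (π / 2) * (√(1 + r ^ 2) ^ 2)⁻¹ := by ring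
      _ = C * (π / 2) * (1 + r ^ 2)⁻¹ := by rw [sq_sqrt (by positivity)]
  simp_rw [intervalIntegral.integral_const_mul]
  calc ∫ r in (0 : ℝ)..K, h r * ∫ s in (0 : ℝ)..K, kernel r s
      ≤ ∫ r in (0 : ℝ)..K, C * (π / 2) * (1 + r ^ 2)⁻¹ :=
        integral_mono_on hK ((hh.mul (continuous_integral_kernel K)).intervalIntegrable 0 K)
          (Continuous.intervalIntegrable (by fun_prop (disch := exact fun r => by positivity)) 0 K)
          fun r _ => hpt r
    _ = C * (π / 2) * arctan K := by
        rw [intervalIntegral.integral_const_mul, integral_inv_one_add_sq, arctan_zero, sub_zero]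
    _ ≤ C * (π / 2) * (π / 2) := by gcongr; exact (arctan_lt_pi_div_two K).le
    _ = C * (π / 2) ^ 2 := by ring

theorem integrand_eq_mul_kernel (r : ℝ) {s : ℝ} (hs : 0 ≤ s) :
    r ^ 4 * s ^ 2 / ((1 + r ^ 2) ^ 2 * (1 + s) ^ 2 * (1 + r ^ 2 + s ^ 2)) =
      r ^ 4 / (1 + r ^ 2) ^ 2 * (s ^ 2 / (1 + s) ^ 2) * kernel r s := by
  have : 0 < 1 + s := by linarith
  unfold kernel
  field_simp

theorem integrand_le_kernel (r : ℝ) {s : ℝ} (hs : 0 ≤ s) :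
    r ^ 4 * s ^ 2 / ((1 + r ^ 2) ^ 2 * (1 + s) ^ 2 * (1 + r ^ 2 + s ^ 2)) ≤ kernel r s := by
  have hw : r ^ 4 / (1 + r ^ 2) ^ 2 ≤ 1 := div_le_one_of_le₀ (by nlinarith) (by positivity)
  have hg : s ^ 2 / (1 + s) ^ 2 ≤ 1 := div_le_one_of_le₀ (by nlinarith) (by positivity)
  rw [integrand_eq_mul_kernel r hs]
  calc r ^ 4 / (1 + r ^ 2) ^ 2 * (s ^ 2 / (1 + s) ^ 2) * kernel r s ≤ 1 * 1 * kernel r s := by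
        gcongr
        · exact kernel_nonneg r s
    _ = kernel r s := by ring

theorem kernel_sub_le_integrand (r : ℝ) {s : ℝ} (hs : 0 ≤ s) :
    kernel r s - 2 * (1 + r ^ 2)⁻¹ * kernel r s - 2 * (√(1 + s ^ 2))⁻¹ * kernel r s ≤
      r ^ 4 * s ^ 2 / ((1 + r ^ 2) ^ 2 * (1 + s) ^ 2 * (1 + r ^ 2 + s ^ 2)) := by
  set w := r ^ 4 / (1 + r ^ 2) ^ 2
  set g := s ^ 2 / (1 + s) ^ 2
  have hw1 : w ≤ 1 := div_le_one_of_le₀ (by nlinarith) (by positivity)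
  have hg1 : g ≤ 1 := div_le_one_of_le₀ (by nlinarith) (by positivity)
  have hw : 1 - 2 * (1 + r ^ 2)⁻¹ ≤ w := by
    rw [le_div_iff₀ (by positivity)]
    field_simp
    nlinarith
  have hg : 1 - 2 * (√(1 + s ^ 2))⁻¹ ≤ g := by
    have hsqrt : √(1 + s ^ 2) ≤ 1 + s := sqrt_le_iff.2 ⟨by linarith, by nlinarith⟩
    calc 1 - 2 * (√(1 + s ^ 2))⁻¹ ≤ 1 - 2 * (1 + s)⁻¹ := by
          gcongr
      _ ≤ g := by
          rw [le_div_iff₀ (by positivity)]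
          field_simp
          nlinarith
  rw [integrand_eq_mul_kernel r hs]
  nlinarith [kernel_nonneg r s, mul_nonneg (sub_nonneg.2 hw1) (sub_nonneg.2 hg1)]

theorem intervalIntegral_intervalIntegral_swap_of_continuous {F : ℝ → ℝ → ℝ}
    (hF : Continuous (uncurry F)) (a b c d : ℝ) :
    ∫ x in a..b, ∫ y in c..d, F x y = ∫ y in c..d, ∫ x in a..b, F x y :=
  intervalIntegral_intervalIntegral_swap <|
    (hF.continuousOn.integrableOn_compact (isCompact_uIcc.prod isCompact_uIcc)).mono_set
      (prod_mono uIoc_subset_uIcc uIoc_subset_uIcc)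

theorem continuousOn_integrand (K : ℝ) :
    ContinuousOn (uncurry fun r s : ℝ =>
      r ^ 4 * s ^ 2 / ((1 + r ^ 2) ^ 2 * (1 + s) ^ 2 * (1 + r ^ 2 + s ^ 2)))
      (univ ×ˢ Icc 0 K) := by
  refine ContinuousOn.div (by fun_prop) (by fun_prop) fun p hp => ?_
  have : 0 ≤ p.2 := hp.2.1
  positivity

theorem I17_le_pi_div_two_mul_arsinh {K : ℝ} (hK : 0 ≤ K) : I17 K ≤ π / 2 * arsinh K :=
  (intervalIntegral_intervalIntegral_mono_on hK hK (continuousOn_integrand K)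
    continuous_kernel.continuousOn fun r _ _ hs => integrand_le_kernel r hs.1).trans
    (integral_integral_kernel_le hK)

theorem pi_div_two_mul_arsinh_sub_le_I17 {K : ℝ} (hK : 0 < K) :
    π / 2 * arsinh K - 1 - π ^ 2 ≤ I17 K := by
  have hc₁ : Continuous (uncurry fun r s : ℝ => 2 * (1 + r ^ 2)⁻¹ * kernel r s) := by
    have : Continuous fun p : ℝ × ℝ => 2 * (1 + p.1 ^ 2)⁻¹ :=
      by fun_prop (disch := exact fun p => by positivity)
    exact this.mul continuous_kernel
  have hc₂ : Continuous (uncurry fun r s : ℝ => 2 * (√(1 + s ^ 2))⁻¹ * kernel r s) :=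
    ((continuous_inv_sqrt_one_add_sq.comp continuous_snd).const_mul 2).mul continuous_kernel
  have herr₁ : ∫ r in (0 : ℝ)..K, ∫ s in (0 : ℝ)..K, 2 * (1 + r ^ 2)⁻¹ * kernel r s ≤
      2 * (π / 2) ^ 2 :=
    integral_integral_mul_kernel_le (by fun_prop (disch := exact fun r => by positivity))
      (fun r => by positivity)
      (fun r => by gcongr; exact (sqrt_le_left (by positivity)).2 (by nlinarith)) hK.le
  have herr₂ : ∫ r in (0 : ℝ)..K, ∫ s in (0 : ℝ)..K, 2 * (√(1 + s ^ 2))⁻¹ * kernel r s ≤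
      2 * (π / 2) ^ 2 := by
    rw [intervalIntegral_intervalIntegral_swap_of_continuous hc₂]
    simp_rw [kernel_comm]
    exact integral_integral_mul_kernel_le (continuous_inv_sqrt_one_add_sq.const_mul 2)
      (fun r => by positivity) (fun r => le_rfl) hK.le
  calc π / 2 * arsinh K - 1 - π ^ 2 ≤ (∫ r in (0 : ℝ)..K, ∫ s in (0 : ℝ)..K, kernel r s)
        - (∫ r in (0 : ℝ)..K, ∫ s in (0 : ℝ)..K, 2 * (1 + r ^ 2)⁻¹ * kernel r s)
        - ∫ r in (0 : ℝ)..K, ∫ s in (0 : ℝ)..K, 2 * (√(1 + s ^ 2))⁻¹ * kernel r s := by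
        linarith [integral_integral_kernel_ge hK]
    _ = ∫ r in (0 : ℝ)..K, ∫ s in (0 : ℝ)..K,
          (kernel r s - 2 * (1 + r ^ 2)⁻¹ * kernel r s - 2 * (√(1 + s ^ 2))⁻¹ * kernel r s) := by
        have hc₀₁ : Continuous (uncurry fun r s : ℝ =>
            kernel r s - 2 * (1 + r ^ 2)⁻¹ * kernel r s) := continuous_kernel.sub hc₁
        rw [intervalIntegral_intervalIntegral_sub hc₀₁ hc₂,
          intervalIntegral_intervalIntegral_sub continuous_kernel hc₁]
    _ ≤ I17 K := intervalIntegral_intervalIntegral_mono_on hK.le hK.le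
        ((continuous_kernel.sub hc₁).sub hc₂).continuousOn (continuousOn_integrand K)
        fun r _ _ hs => kernel_sub_le_integrand r hs.1

theorem log_le_arsinh {x : ℝ} (hx : 0 < x) : log x ≤ arsinh x :=
  log_le_log hx (le_add_of_nonneg_right (sqrt_nonneg _))

theorem arsinh_le_log_add_log_three {x : ℝ} (hx : 1 ≤ x) : arsinh x ≤ log x + log 3 := by
  have hsqrt : √(1 + x ^ 2) ≤ 2 * x := (sqrt_le_left (by positivity)).2 (by nlinarith)
  rw [← log_mul (by positivity) (by norm_num)]
  exact log_le_log (by positivity) (by linarith)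

theorem isBigO_I17_sub_log :
    (fun K => I17 K - π / 2 * log K) =O[atTop] fun _ => (1 : ℝ) := by
  refine IsBigO.of_bound (π ^ 2 + 1) ?_
  filter_upwards [eventually_ge_atTop 1] with K hK
  have hlog := log_le_arsinh (zero_lt_one.trans_le hK)
  have hlog3 := arsinh_le_log_add_log_three hK
  have h3 : log 3 ≤ 2 := by linarith [log_le_sub_one_of_pos (by norm_num : (0 : ℝ) < 3)]
  have hupper := I17_le_pi_div_two_mul_arsinh (zero_le_one.trans hK)
  have hlower := pi_div_two_mul_arsinh_sub_le_I17 (zero_lt_one.trans_le hK)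
  rw [norm_one, mul_one, Real.norm_eq_abs, abs_le]
  constructor <;> nlinarith [pi_pos, pi_gt_three]

theorem tendsto_div_of_isBigO_sub {α : Type*} {l : Filter α} {f g : α → ℝ} {a : ℝ}
    (hg : Tendsto g l atTop) (hfg : (fun x => f x - a * g x) =O[l] fun _ => (1 : ℝ)) :
    Tendsto (fun x => f x / g x) l (nhds a) := by
  have hdiv : (fun x => f x / g x - a) =O[l] fun x => (g x)⁻¹ := by
    refine (hfg.mul (isBigO_refl (fun x => (g x)⁻¹) l)).congr' ?_ (by simp)
    filter_upwards [hg.eventually_ne_atTop 0] with x hx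
    field_simp
  simpa using (hdiv.trans_tendsto (tendsto_inv_atTop_zero.comp hg)).add_const a

theorem tendsto_comp_div_log_one_div_one_sub {f : ℝ → ℝ} {a ε : ℝ} (hε : 0 < ε)
    (hf : (fun K => f K - a * log K) =O[atTop] fun _ => (1 : ℝ)) :
    Tendsto (fun l : ℝ => f (ε / √(1 - l)) / log (1 / (1 - l)))
      (nhdsWithin 1 (Iio 1)) (nhds (a / 2)) := by
  have hsub : Tendsto (fun l : ℝ => 1 - l) (nhdsWithin 1 (Iio 1)) (nhdsWithin 0 (Ioi 0)) := by
    refine tendsto_nhdsWithin_of_tendsto_nhds_of_eventually_within _ ?_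
      (eventually_nhdsWithin_of_forall fun _ hl => mem_Ioi.2 (sub_pos.2 hl))
    exact ((continuous_const.sub continuous_id).tendsto' (1 : ℝ) 0 (sub_self 1)).mono_left
      nhdsWithin_le_nhds
  have hinv : Tendsto (fun l : ℝ => (1 - l)⁻¹) (nhdsWithin 1 (Iio 1)) atTop :=
    tendsto_inv_nhdsGT_zero.comp hsub
  have hlog : Tendsto (fun l : ℝ => log (1 / (1 - l))) (nhdsWithin 1 (Iio 1)) atTop := by
    simpa only [one_div, comp_def] using tendsto_log_atTop.comp hinv
  have hK : Tendsto (fun l : ℝ => ε / √(1 - l)) (nhdsWithin 1 (Iio 1)) atTop := by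
    simpa only [sqrt_inv, div_eq_mul_inv, comp_def] using
      (tendsto_sqrt_atTop.comp hinv).const_mul_atTop hε
  refine tendsto_div_of_isBigO_sub hlog ((hf.comp_tendsto hK).add
    (isBigO_const_const (a * log ε) one_ne_zero _) |>.congr' ?_ EventuallyEq.rfl)
  filter_upwards [eventually_nhdsWithin_of_forall fun l (hl : l ∈ Iio 1) => hl] with l hl
  have h1l : 0 < 1 - l := sub_pos.2 hl
  simp only [comp_apply]
  rw [log_div hε.ne' (sqrt_pos.2 h1l).ne', log_sqrt h1l.le, one_div, log_inv]
  ring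

/-- `∫_0^K ∫_0^K r⁴s²/[(1+r²)²(1+s)²(1+r²+s²)] ∼ (π/2) log K` as `K → ∞`; with
`K = ε/√(1−λ)` this is `∼ (π/4) log(1/(1−λ))` as `λ ↑ 1`. -/
theorem stmt_17 :
    Tendsto (fun K => I17 K / Real.log K) atTop (nhds (π / 2))
    ∧ ∀ ε : ℝ, 0 < ε →
      Tendsto (fun l : ℝ => I17 (ε / Real.sqrt (1 - l)) / Real.log (1 / (1 - l)))
        (nhdsWithin 1 (Set.Iio 1)) (nhds (π / 4)) := by
  refine ⟨tendsto_div_of_isBigO_sub tendsto_log_atTop isBigO_I17_sub_log, fun ε hε => ?_⟩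
  convert tendsto_comp_div_log_one_div_one_sub hε isBigO_I17_sub_log using 2
  ring
end

section
/- Let X be genuinely d-dimensional ℤ^d-valued with E|X|² = ∞ and suppose X is symmetric (so f(t) = E[exp(i⟨t,X⟩)] is real with 1 − f(t) ≥ c|t|²). Then for every ε > 0 there exists x₀ > 0 such that for all 0 < x ≤ x₀ the Lebesgue measure of {t ∈ [−π,π]^d : 1 − f(t) ≤ x} is at most ε x^{d/2}; i.e. λ_d{t : 1 − f(t) ≤ x} = o(x^{d/2}) as x → 0⁺. -/
open MeasureTheory Real Pointwise

private lemma quarter_sq_le_one_sub_cos {u : ℝ} (h : |u| ≤ 1) :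
    u ^ 2 / 4 ≤ 1 - Real.cos u := by
  have hb := Real.cos_bound h
  have h2 : u ^ 2 ≤ 1 := by nlinarith [abs_nonneg u, sq_abs u]
  have h4 : |u| ^ 4 = u ^ 2 * u ^ 2 := by rw [← sq_abs]; ring
  rw [abs_le] at hb
  nlinarith [sq_nonneg u]

/-- For a symmetric genuinely `d`-dimensional `ℤ^d`-valued variable with infinite second
moment and real characteristic function `f` satisfying `1 − f(t) ≥ c|t|²`, the Lebesgue
measure of the sublevel sets `{t ∈ [−π,π]^d : 1 − f(t) ≤ x}` is `o(x^{d/2})` as `x → 0⁺`. -/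
theorem stmt_19 {d : ℕ} (hd : 1 ≤ d) (p : PMF (Fin d → ℤ))
    (hsym : ∀ z, p (-z) = p z)
    (hspan : Submodule.span ℝ
        ((fun z : Fin d → ℤ => fun i => (z i : ℝ)) ''
          {z | ∃ a b : Fin d → ℤ, p a ≠ 0 ∧ p b ≠ 0 ∧ z = a - b}) = ⊤)
    (hinf : ¬ Summable (fun z : Fin d → ℤ => (p z).toReal * ∑ i, ((z i : ℝ)) ^ 2))
    (f : (Fin d → ℝ) → ℝ)
    (hf : ∀ t, f t = ∑' z : Fin d → ℤ, (p z).toReal * Real.cos (∑ i, t i * (z i : ℝ)))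
    (c : ℝ) (hc : 0 < c)
    (hlow : ∀ t : Fin d → ℝ, (∀ i, t i ∈ Set.Icc (-π) π) →
      c * ∑ i, (t i) ^ 2 ≤ 1 - f t) :
    ∀ ε : ℝ, 0 < ε → ∃ x₀ : ℝ, 0 < x₀ ∧ ∀ x : ℝ, 0 < x → x ≤ x₀ →
      (volume {t : Fin d → ℝ | (∀ i, t i ∈ Set.Icc (-π) π) ∧ 1 - f t ≤ x}).toReal
        ≤ ε * x ^ ((d : ℝ) / 2) := by
  intro ε hε
  set q : (Fin d → ℤ) → ℝ := fun z => (p z).toReal with hqdef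
  have hq0 : ∀ z, 0 ≤ q z := fun z => ENNReal.toReal_nonneg
  have hqs : Summable q := by
    refine ENNReal.summable_toReal ?_
    rw [p.tsum_coe]; exact ENNReal.one_ne_top
  have hq1 : (∑' z, q z) = 1 := by
    have h := ENNReal.tsum_toReal_eq (fun a => p.apply_ne_top a)
    rw [p.tsum_coe, ENNReal.toReal_one] at h
    exact h.symm
  have hsc : ∀ t : Fin d → ℝ, Summable (fun z => q z * Real.cos (∑ i, t i * (z i : ℝ))) := by
    intro t
    refine Summable.of_abs ?_
    refine Summable.of_nonneg_of_le (fun z => abs_nonneg _) (fun z => ?_) hqs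
    rw [abs_mul, abs_of_nonneg (hq0 z)]
    exact mul_le_of_le_one_right (hq0 z) (abs_cos_le_one _)
  have hterm : ∀ t : Fin d → ℝ,
      Summable (fun z => q z * (1 - Real.cos (∑ i, t i * (z i : ℝ)))) := by
    intro t
    exact (hqs.sub (hsc t)).congr fun z => by ring
  have hone : ∀ t : Fin d → ℝ,
      1 - f t = ∑' z, q z * (1 - Real.cos (∑ i, t i * (z i : ℝ))) := by
    intro t
    calc 1 - f t = (∑' z, q z) - ∑' z, q z * Real.cos (∑ i, t i * (z i : ℝ)) := by
          rw [hf t, hq1]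
      _ = ∑' z, (q z - q z * Real.cos (∑ i, t i * (z i : ℝ))) :=
          (Summable.tsum_sub hqs (hsc t)).symm
      _ = ∑' z, q z * (1 - Real.cos (∑ i, t i * (z i : ℝ))) :=
          tsum_congr fun z => by ring
  have hfin : ∀ (F : Finset (Fin d → ℤ)) (t : Fin d → ℝ),
      ∑ z ∈ F, q z * (1 - Real.cos (∑ i, t i * (z i : ℝ))) ≤ 1 - f t := by
    intro F t
    rw [hone t]
    refine Summable.sum_le_tsum F (fun z _ => ?_) (hterm t)
    exact mul_nonneg (hq0 z) (by nlinarith [Real.cos_le_one (∑ i, t i * (z i : ℝ))])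
  set Φ : (Fin d → ℝ) → (Fin d → ℤ) → ℝ :=
    fun s z => q z * (∑ i, s i * (z i : ℝ)) ^ 2 with hΦdef
  have hΦ0 : ∀ s z, 0 ≤ Φ s z := fun s z => mul_nonneg (hq0 z) (sq_nonneg _)
  set V : Submodule ℝ (Fin d → ℝ) :=
    { carrier := {s | Summable (Φ s)}
      zero_mem' := by
        have h0 : Φ 0 = fun _ => (0 : ℝ) := by
          funext z; simp [hΦdef]
        rw [Set.mem_setOf_eq, h0]; exact summable_zero
      add_mem' := by
        intro s u hs hu
        refine Summable.of_nonneg_of_le (hΦ0 _) (fun z => ?_)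
          ((hs.mul_left 2).add (hu.mul_left 2))
        have hsum : (∑ i, (s + u) i * (z i : ℝ))
            = (∑ i, s i * (z i : ℝ)) + (∑ i, u i * (z i : ℝ)) := by
          rw [← Finset.sum_add_distrib]
          exact Finset.sum_congr rfl fun i _ => by simp [add_mul]
        simp only [hΦdef, hsum]
        nlinarith [sq_nonneg ((∑ i, s i * (z i : ℝ)) - (∑ i, u i * (z i : ℝ))), hq0 z]
      smul_mem' := by
        intro a s hs
        have h1 : Φ (a • s) = fun z => a ^ 2 * Φ s z := by
          funext z
          have h2 : (∑ i, (a • s) i * (z i : ℝ)) = a * ∑ i, s i * (z i : ℝ) := by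
            rw [Finset.mul_sum]
            exact Finset.sum_congr rfl fun i _ => by simp [mul_assoc]
          simp only [hΦdef, h2]; ring
        show Summable (Φ (a • s))
        rw [h1]
        exact hs.mul_left _ } with hVdef
  have hVne : V ≠ ⊤ := by
    intro hV
    apply hinf
    have hsi : ∀ i : Fin d, Summable (fun z : Fin d → ℤ => q z * ((z i : ℝ)) ^ 2) := by
      intro i
      have hmem : (Pi.single i 1 : Fin d → ℝ) ∈ V := hV ▸ Submodule.mem_top
      have h1 : Φ (Pi.single i 1) = fun z => q z * ((z i : ℝ)) ^ 2 := by
        funext z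
        have h2 : (∑ j, (Pi.single i 1 : Fin d → ℝ) j * (z j : ℝ)) = (z i : ℝ) := by
          rw [Finset.sum_eq_single i]
          · simp
          · intro b _ hb; simp [Pi.single_apply, hb]
          · simp
        simp only [hΦdef, h2]
      exact h1 ▸ hmem
    exact (summable_sum (s := (Finset.univ : Finset (Fin d))) (fun i _ => hsi i)).congr
      fun z => by rw [Finset.mul_sum]
  set F : ℕ → Finset (Fin d → ℤ) :=
    fun n => Finset.Icc (fun _ => -(n : ℤ)) (fun _ => (n : ℤ)) with hFdef
  have hFmono : ∀ {m n : ℕ}, m ≤ n → F m ⊆ F n := by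
    intro m n hmn
    refine Finset.Icc_subset_Icc ?_ ?_ <;>
      (rw [Pi.le_def]; intro i; simp; omega)
  have hzF : ∀ (u : Finset (Fin d → ℤ)), ∃ n, u ⊆ F n := by
    intro u
    obtain ⟨N, hN⟩ : ∃ N : ℕ, ∀ z ∈ u, ∀ i, (z i).natAbs ≤ N :=
      ⟨u.sup (fun z => Finset.univ.sup fun i => (z i).natAbs), fun z hz i =>
        le_trans
          (Finset.le_sup (f := fun i : Fin d => (z i).natAbs) (Finset.mem_univ i))
          (Finset.le_sup
            (f := fun z : Fin d → ℤ => Finset.univ.sup fun i => (z i).natAbs) hz)⟩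
    refine ⟨N, fun z hz => ?_⟩
    have hb := hN z hz
    rw [hFdef]
    simp only [Finset.mem_Icc, Pi.le_def]
    exact ⟨fun i => by have := hb i; omega, fun i => by have := hb i; omega⟩
  set D : ℕ → Set (Fin d → ℝ) :=
    fun n => {s | (∑ i, s i ^ 2 ≤ 1 / c) ∧ ∑ z ∈ F n, Φ s z ≤ 4} with hDdef
  have hDmeas : ∀ n, MeasurableSet (D n) := by
    intro n
    have h1 : Measurable fun s : Fin d → ℝ => ∑ i, s i ^ 2 :=
      Finset.measurable_sum _ fun i _ => (measurable_pi_apply i).pow_const 2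
    have h2 : Measurable fun s : Fin d → ℝ => ∑ z ∈ F n, Φ s z := by
      refine Finset.measurable_sum _ fun z _ => ?_
      have h3 : Measurable fun s : Fin d → ℝ => (∑ i, s i * (z i : ℝ)) :=
        Finset.measurable_sum _ fun i _ => (measurable_pi_apply i).mul_const _
      exact measurable_const.mul (h3.pow_const 2)
    exact MeasurableSet.inter (measurableSet_le h1 measurable_const)
      (measurableSet_le h2 measurable_const)
  have hDanti : Antitone D := by
    intro m n hmn s hs
    exact ⟨hs.1, le_trans (Finset.sum_le_sum_of_subset_of_nonneg (hFmono hmn)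
      (fun z _ _ => hΦ0 s z)) hs.2⟩
  have hDfin : volume (D 0) ≠ ⊤ := by
    have hsub : D 0 ⊆ Metric.closedBall (0 : Fin d → ℝ) (Real.sqrt (1 / c)) := by
      intro s hs
      rw [Metric.mem_closedBall, dist_zero_right,
        pi_norm_le_iff_of_nonneg (Real.sqrt_nonneg _)]
      intro i
      rw [Real.norm_eq_abs, ← Real.sqrt_sq_eq_abs]
      apply Real.sqrt_le_sqrt
      calc s i ^ 2 ≤ ∑ j, s j ^ 2 :=
            Finset.single_le_sum (fun j _ => sq_nonneg (s j)) (Finset.mem_univ i)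
        _ ≤ 1 / c := hs.1
    exact ne_of_lt (lt_of_le_of_lt (measure_mono hsub) measure_closedBall_lt_top)
  have hDinter : volume (⋂ n, D n) = 0 := by
    refine measure_mono_null ?_ (Measure.addHaar_submodule volume V hVne)
    intro s hs
    rw [Set.mem_iInter] at hs
    show Summable (Φ s)
    refine summable_of_sum_le (c := 4) (hΦ0 s) fun u => ?_
    obtain ⟨n, hn⟩ := hzF u
    calc ∑ z ∈ u, Φ s z ≤ ∑ z ∈ F n, Φ s z :=
          Finset.sum_le_sum_of_subset_of_nonneg hn (fun z _ _ => hΦ0 s z)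
      _ ≤ 4 := (hs n).2
  have htend : Filter.Tendsto (fun n => volume (D n)) Filter.atTop (nhds 0) := by
    have h := tendsto_measure_iInter_atTop (μ := volume)
      (fun n => (hDmeas n).nullMeasurableSet) hDanti ⟨0, hDfin⟩
    rwa [hDinter] at h
  obtain ⟨n, hn⟩ : ∃ n, volume (D n) ≤ ENNReal.ofReal ε := by
    rw [ENNReal.tendsto_atTop_zero] at htend
    obtain ⟨N, hN⟩ := htend (ENNReal.ofReal ε) (by simpa using hε)
    exact ⟨N, hN N le_rfl⟩
  have hMtop : volume (D n) ≠ ⊤ := ne_of_lt (lt_of_le_of_lt hn ENNReal.ofReal_lt_top)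
  have hMle : (volume (D n)).toReal ≤ ε := ENNReal.toReal_le_of_le_ofReal hε.le hn
  refine ⟨c / ((d : ℝ) * n + 1) ^ 2, by positivity, ?_⟩
  intro x hx hxle
  set r : ℝ := Real.sqrt x with hrdef
  have hr : 0 < r := Real.sqrt_pos.2 hx
  have hr2 : r ^ 2 = x := Real.sq_sqrt hx.le
  have hsub : {t : Fin d → ℝ | (∀ i, t i ∈ Set.Icc (-π) π) ∧ 1 - f t ≤ x} ⊆ r • D n := by
    intro t ht
    obtain ⟨htbox, htx⟩ := ht
    have htsum : ∑ i, t i ^ 2 ≤ x / c :=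
      (le_div_iff₀' hc).2 (le_trans (hlow t htbox) htx)
    rw [Set.mem_smul_set_iff_inv_smul_mem₀ hr.ne']
    set s : Fin d → ℝ := r⁻¹ • t with hsdef
    have hsi : ∀ i, s i = r⁻¹ * t i := fun i => rfl
    have hst : ∀ z : Fin d → ℤ,
        (∑ i, s i * (z i : ℝ)) = r⁻¹ * ∑ i, t i * (z i : ℝ) := by
      intro z
      rw [Finset.mul_sum]
      exact Finset.sum_congr rfl fun i _ => by rw [hsi, mul_assoc]
    constructor
    · -- sum of squares bound
      have h1 : ∑ i, s i ^ 2 = x⁻¹ * ∑ i, t i ^ 2 := by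
        rw [Finset.mul_sum]
        refine Finset.sum_congr rfl fun i _ => ?_
        rw [hsi, mul_pow, ← hr2]
        rw [inv_pow]
      rw [h1]
      calc x⁻¹ * ∑ i, t i ^ 2 ≤ x⁻¹ * (x / c) := by
            exact mul_le_mul_of_nonneg_left htsum (by positivity)
        _ = 1 / c := by field_simp
    · -- truncated quadratic form bound
      by_contra h4
      push_neg at h4
      -- |t·z| ≤ 1 for z in F n
      have hb1 : ∀ z ∈ F n, |∑ i, t i * (z i : ℝ)| ≤ 1 := by
        intro z hz
        have hzi : ∀ i, |(z i : ℝ)| ≤ (n : ℝ) := by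
          intro i
          rw [hFdef] at hz
          simp only [Finset.mem_Icc] at hz
          have h5 := Pi.le_def.1 hz.1 i
          have h6 := Pi.le_def.1 hz.2 i
          rw [abs_le]
          exact ⟨by exact_mod_cast h5, by exact_mod_cast h6⟩
        have hti : ∀ i, |t i| ≤ Real.sqrt (x / c) := by
          intro i
          rw [← Real.sqrt_sq_eq_abs]
          apply Real.sqrt_le_sqrt
          calc t i ^ 2 ≤ ∑ j, t j ^ 2 :=
                Finset.single_le_sum (fun j _ => sq_nonneg (t j)) (Finset.mem_univ i)
            _ ≤ x / c := htsum
        have hsx : Real.sqrt (x / c) ≤ 1 / ((d : ℝ) * n + 1) := by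
          have hxc : x / c ≤ (1 / ((d : ℝ) * n + 1)) ^ 2 := by
            rw [div_le_iff₀ hc]
            calc x ≤ c / ((d : ℝ) * n + 1) ^ 2 := hxle
              _ = (1 / ((d : ℝ) * n + 1)) ^ 2 * c := by
                  rw [div_eq_mul_inv, one_div, inv_pow, mul_comm]
          calc Real.sqrt (x / c) ≤ Real.sqrt ((1 / ((d : ℝ) * n + 1)) ^ 2) :=
                Real.sqrt_le_sqrt hxc
            _ = 1 / ((d : ℝ) * n + 1) := Real.sqrt_sq (by positivity)
        calc |∑ i, t i * (z i : ℝ)| ≤ ∑ i, |t i * (z i : ℝ)| :=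
              Finset.abs_sum_le_sum_abs _ _
          _ ≤ ∑ _i : Fin d, Real.sqrt (x / c) * (n : ℝ) := by
              refine Finset.sum_le_sum fun i _ => ?_
              rw [abs_mul]
              exact mul_le_mul (hti i) (hzi i) (abs_nonneg _) (Real.sqrt_nonneg _)
          _ = (d : ℝ) * (Real.sqrt (x / c) * (n : ℝ)) := by
              rw [Finset.sum_const, Finset.card_univ, Fintype.card_fin, nsmul_eq_mul]
          _ ≤ (d : ℝ) * (1 / ((d : ℝ) * n + 1) * (n : ℝ)) := by
              refine mul_le_mul_of_nonneg_left ?_ (by positivity)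
              exact mul_le_mul_of_nonneg_right hsx (by positivity)
          _ ≤ 1 := by
              rw [div_mul_eq_mul_div, mul_div_assoc', div_le_one (by positivity)]
              nlinarith [Nat.cast_nonneg (α := ℝ) d, Nat.cast_nonneg (α := ℝ) n]
      -- lower bound on 1 - f t
      have hkey : x < 1 - f t := by
        have h7 : ∀ z ∈ F n, q z * (∑ i, t i * (z i : ℝ)) ^ 2 / 4
            ≤ q z * (1 - Real.cos (∑ i, t i * (z i : ℝ))) := by
          intro z hz
          have := quarter_sq_le_one_sub_cos (hb1 z hz)
          calc q z * (∑ i, t i * (z i : ℝ)) ^ 2 / 4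
              = q z * ((∑ i, t i * (z i : ℝ)) ^ 2 / 4) := by ring
            _ ≤ q z * (1 - Real.cos (∑ i, t i * (z i : ℝ))) :=
                mul_le_mul_of_nonneg_left this (hq0 z)
        have h8 : ∑ z ∈ F n, q z * (∑ i, t i * (z i : ℝ)) ^ 2 / 4 ≤ 1 - f t :=
          le_trans (Finset.sum_le_sum h7) (hfin (F n) t)
        have h9 : ∑ z ∈ F n, q z * (∑ i, t i * (z i : ℝ)) ^ 2 = x * ∑ z ∈ F n, Φ s z := by
          rw [Finset.mul_sum]
          refine Finset.sum_congr rfl fun z _ => ?_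
          simp only [hΦdef]
          rw [hst z, mul_pow, ← hr2, inv_pow]
          field_simp
        have h10 : x * 4 < x * ∑ z ∈ F n, Φ s z :=
          (mul_lt_mul_iff_right₀ hx).2 h4
        calc x = x * 4 / 4 := by ring
          _ < x * (∑ z ∈ F n, Φ s z) / 4 := by linarith
          _ = ∑ z ∈ F n, q z * (∑ i, t i * (z i : ℝ)) ^ 2 / 4 := by
              rw [← h9, Finset.sum_div]
          _ ≤ 1 - f t := h8
      linarith
  -- conclude via scaling
  have hfr : Module.finrank ℝ (Fin d → ℝ) = d := Module.finrank_fin_fun ℝ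
  have hle : volume {t : Fin d → ℝ | (∀ i, t i ∈ Set.Icc (-π) π) ∧ 1 - f t ≤ x}
      ≤ ENNReal.ofReal (r ^ d) * volume (D n) := by
    calc volume {t : Fin d → ℝ | (∀ i, t i ∈ Set.Icc (-π) π) ∧ 1 - f t ≤ x}
        ≤ volume (r • D n) := measure_mono hsub
      _ = ENNReal.ofReal (r ^ d) * volume (D n) := by
          rw [Measure.addHaar_smul_of_nonneg volume hr.le, hfr]
  have hne : ENNReal.ofReal (r ^ d) * volume (D n) ≠ ⊤ :=
    ENNReal.mul_ne_top ENNReal.ofReal_ne_top hMtop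
  have hrpow : r ^ d = x ^ ((d : ℝ) / 2) := by
    rw [hrdef, Real.sqrt_eq_rpow, ← Real.rpow_natCast (x ^ ((1:ℝ)/2)) d,
      ← Real.rpow_mul hx.le]
    congr 1
    ring
  calc (volume {t : Fin d → ℝ | (∀ i, t i ∈ Set.Icc (-π) π) ∧ 1 - f t ≤ x}).toReal
      ≤ (ENNReal.ofReal (r ^ d) * volume (D n)).toReal := ENNReal.toReal_mono hne hle
    _ = r ^ d * (volume (D n)).toReal := by
        rw [ENNReal.toReal_mul, ENNReal.toReal_ofReal (by positivity)]
    _ ≤ r ^ d * ε := mul_le_mul_of_nonneg_left hMle (by positivity)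
    _ = ε * x ^ ((d : ℝ) / 2) := by rw [hrpow]; ring
end
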